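/- arXiv:math/0605044 — 5 statements merged into one kernel-verified Lean document; each statement's English description precedes it below -/
import Mathlib

section
/- Let K be a field and let φ = (f,g) = ρ_n τ ρ_{n−1} τ ⋯ τ ρ_1 τ ρ_0 be a z-automorphism of K⟨x,y,z⟩, where τ = (y,x), ρ_0 = (α₀x+p₀(y,z), β₀y+r₀(z)) is z-triangular, and ρ_i = (x+p_i(y,z), y) with p_i(0,z) = 0 for i = 1, …, n. Assume bideg p_i(y,z) > (1,0) for i = 1, …, n (in particular ρ_n is not linear) and that p₀(y,z) is not of the form γ₀y + p′₀(z). Let q_i(y,z) denote the leading bihomogeneous component of p_i(y,z). Then the leading bihomogeneous components of f and g are f̄ = q₀(q₁(…q_{n−1}(q_n(y,z),z)…,z),z) and ḡ = β₀ q₁(…q_{n−1}(q_n(y,z),z)…,z), and bideg f̄ > (1,0); in particular φ is not the identity automorphism. -/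
open MonoidAlgebra

noncomputable section

/-- The free associative algebra `K⟨x,y,z⟩`. -/
abbrev FA (K : Type) [Field K] := MonoidAlgebra K (FreeMonoid (Fin 3))

/-- The free associative algebra `K⟨t,z⟩`; `t` is letter `0`, `z` is letter `1`. -/
abbrev FA2 (K : Type) [Field K] := MonoidAlgebra K (FreeMonoid (Fin 2))

variable (K : Type) [Field K]

/-- The generators `x = Xv 0`, `y = Xv 1`, `z = Xv 2`. -/
def Xv (i : Fin 3) : FA K := MonoidAlgebra.of K (FreeMonoid (Fin 3)) (FreeMonoid.of i)

/-- The substitution homomorphism `K⟨t,z⟩ → K⟨x,y,z⟩` sending `t ↦ f 0`, `z ↦ f 1`. -/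
def subst2 (f : Fin 2 → FA K) : FA2 K →ₐ[K] FA K :=
  MonoidAlgebra.lift K (FA K) (FreeMonoid (Fin 2)) (FreeMonoid.lift f)

/-- `h(xz - zy, z)`: the image of `h(t,z)` under `t ↦ xz − zy`, `z ↦ z`. -/
def hSub (h : FA2 K) : FA K :=
  subst2 K ![Xv K 0 * Xv K 2 - Xv K 2 * Xv K 1, Xv K 2] h

/-- `φ` is a `z`-affine automorphism:
`(α₁₁x+α₂₁y+γ₁z+β₁, α₁₂x+α₂₂y+γ₂z+β₂, z)` with `(α_{ij})` invertible. -/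
def IsZAffine (φ : FA K ≃ₐ[K] FA K) : Prop :=
  ∃ (α : Matrix (Fin 2) (Fin 2) K) (β γ : Fin 2 → K),
    IsUnit α.det ∧
    φ (Xv K 0) = α 0 0 • Xv K 0 + α 1 0 • Xv K 1 + γ 0 • Xv K 2 + algebraMap K (FA K) (β 0) ∧
    φ (Xv K 1) = α 0 1 • Xv K 0 + α 1 1 • Xv K 1 + γ 1 • Xv K 2 + algebraMap K (FA K) (β 1) ∧
    φ (Xv K 2) = Xv K 2

/-- `φ` is a `z`-triangular automorphism: `(α₁x+p₁(y,z), α₂y+p₂(z), z)` with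
`α₁, α₂ ∈ K∖{0}`, `p₁ ∈ K⟨y,z⟩`, `p₂ ∈ K[z]`. -/
def IsZTriangular (φ : FA K ≃ₐ[K] FA K) : Prop :=
  ∃ (α₁ α₂ : Kˣ) (p₁ p₂ : FA K),
    p₁ ∈ Algebra.adjoin K {Xv K 1, Xv K 2} ∧ p₂ ∈ Algebra.adjoin K {Xv K 2} ∧
    φ (Xv K 0) = (α₁ : K) • Xv K 0 + p₁ ∧
    φ (Xv K 1) = (α₂ : K) • Xv K 1 + p₂ ∧
    φ (Xv K 2) = Xv K 2

/-- The group of `z`-tame automorphisms: the subgroup of `Aut(K⟨x,y,z⟩)` generated by the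
`z`-affine and the `z`-triangular automorphisms. -/
def TAutZ : Subgroup (FA K ≃ₐ[K] FA K) :=
  Subgroup.closure {φ | IsZAffine K φ ∨ IsZTriangular K φ}

/-- The substitution (endomorphism) sending the generators `x, y, z` to `f 0, f 1, f 2`. -/
def subst (f : Fin 3 → FA K) : FA K →ₐ[K] FA K :=
  MonoidAlgebra.lift K (FA K) (FreeMonoid (Fin 3)) (FreeMonoid.lift f)

/-- The bidegree of a monomial `w`: `(deg_x w + deg_y w, deg_z w)`, ordered
lexicographically. -/
def bidegLex (w : FreeMonoid (Fin 3)) : ℕ ×ₗ ℕ :=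
  toLex ((FreeMonoid.toList w).count 0 + (FreeMonoid.toList w).count 1,
    (FreeMonoid.toList w).count 2)

/-- The maximal bidegree of the monomials of `p` (`⊥` for `p = 0`). -/
def maxBideg (p : FA K) : WithBot (ℕ ×ₗ ℕ) := (p.coeff.support.image bidegLex).max

open scoped Classical in
/-- The leading bihomogeneous component of `p`: the sum of the monomials of `p` of maximal
bidegree. -/
def lead (p : FA K) : FA K :=
  MonoidAlgebra.ofCoeff (Finsupp.filter (fun w => (bidegLex w : WithBot (ℕ ×ₗ ℕ)) = maxBideg K p) p.coeff)

/-- `nestedComp q m = q_0(q_1(…(q_m(y,z),z)…,z),z)` — each `q_j` evaluated at the next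
composition substituted for `y`. -/
def nestedComp (q : ℕ → FA K) : ℕ → FA K
  | 0 => q 0
  | k + 1 => subst K ![Xv K 0, nestedComp q k, Xv K 2] (q (k + 1))

namespace MonoidAlgebra

variable {k G : Type*} [Semiring k]

/-- the support of an element of the monoid algebra -/
abbrev support (p : MonoidAlgebra k G) : Finset G := p.coeff.support

instance instCoeFunPort : CoeFun (MonoidAlgebra k G) (fun _ => G → k) := ⟨fun p => ⇑p.coeff⟩

end MonoidAlgebra

namespace MAP

variable {k G : Type*}

lemma support_add [Semiring k] [DecidableEq G] {a b : MonoidAlgebra k G} :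
    (a + b).support ⊆ a.support ∪ b.support := Finsupp.support_add

lemma support_sub [Ring k] [DecidableEq G] {a b : MonoidAlgebra k G} :
    (a - b).support ⊆ a.support ∪ b.support := Finsupp.support_sub

lemma support_smul [Semiring k] {c : k} {a : MonoidAlgebra k G} :
    (c • a).support ⊆ a.support := Finsupp.support_smul

lemma mem_support_iff [Semiring k] {p : MonoidAlgebra k G} {w : G} :
    w ∈ p.support ↔ p w ≠ 0 := Finsupp.mem_support_iff

lemma support_nonempty_iff [Semiring k] {p : MonoidAlgebra k G} :
    p.support.Nonempty ↔ p ≠ 0 :=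
  Finsupp.support_nonempty_iff.trans MonoidAlgebra.coeff_eq_zero.not

lemma support_eq_empty [Semiring k] {p : MonoidAlgebra k G} :
    p.coeff.support = ∅ ↔ p = 0 :=
  Finsupp.support_eq_empty.trans MonoidAlgebra.coeff_eq_zero

lemma add_apply [Semiring k] {a b : MonoidAlgebra k G} {w : G} :
    (a + b) w = a w + b w := rfl

lemma smul_apply [Semiring k] {c : k} {a : MonoidAlgebra k G} {w : G} :
    (c • a) w = c • a w := rfl

lemma finset_sum_apply [Semiring k] {ι : Type*} (s : Finset ι) (f : ι → MonoidAlgebra k G)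
    (w : G) : (∑ i ∈ s, f i) w = ∑ i ∈ s, f i w := by
  rw [MonoidAlgebra.coeff_sum, Finsupp.finset_sum_apply]

lemma single_eq_same [Semiring k] {a : G} {b : k} : (MonoidAlgebra.single a b) a = b :=
  Finsupp.single_eq_same

lemma support_single_subset [Semiring k] {a : G} {b : k} :
    (MonoidAlgebra.single a b).support ⊆ {a} := Finsupp.support_single_subset

lemma single_eq_zero [Semiring k] {a : G} {b : k} : MonoidAlgebra.single a b = 0 ↔ b = 0 :=
  MonoidAlgebra.coeff_inj.symm.trans Finsupp.single_eq_zero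

lemma support_subset_singleton [Semiring k] {p : MonoidAlgebra k G} {a : G} :
    p.support ⊆ {a} ↔ p = MonoidAlgebra.single a (p a) :=
  ⟨fun h => MonoidAlgebra.coeff_injective (Finsupp.support_subset_singleton.1 h),
    fun h => Finsupp.support_subset_singleton.2 (congrArg MonoidAlgebra.coeff h)⟩

open scoped Pointwise in
lemma support_mul [Semiring k] [DecidableEq G] [Mul G] (a b : MonoidAlgebra k G) :
    (a * b).support ⊆ a.support * b.support := MonoidAlgebra.support_coeff_mul_subset a b

end MAP

abbrev W3' := FreeMonoid (Fin 3)

/-- plain-pair bidegree -/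
def dg (w : W3') : ℕ × ℕ :=
  ((FreeMonoid.toList w).count 0 + (FreeMonoid.toList w).count 1,
    (FreeMonoid.toList w).count 2)

lemma bidegLex_eq (w : W3') : bidegLex w = toLex (dg w) := rfl

lemma dg_mul (u v : W3') : dg (u * v) = ((dg u).1 + (dg v).1, (dg u).2 + (dg v).2) := by
  simp [dg, FreeMonoid.toList_mul, List.count_append]; omega

-- lex order arithmetic on pairs of naturals
lemma ladd_le_le {a a' b b' : ℕ × ℕ} (h1 : toLex a ≤ toLex a') (h2 : toLex b ≤ toLex b') :
    toLex (a.1 + b.1, a.2 + b.2) ≤ toLex (a'.1 + b'.1, a'.2 + b'.2) := by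
  rcases Prod.Lex.toLex_le_toLex.1 h1 with h | ⟨h, h'⟩ <;>
  rcases Prod.Lex.toLex_le_toLex.1 h2 with g | ⟨g, g'⟩ <;>
  · refine Prod.Lex.toLex_le_toLex.2 ?_; omega

lemma ladd_le_lt {a a' b b' : ℕ × ℕ} (h1 : toLex a ≤ toLex a') (h2 : toLex b < toLex b') :
    toLex (a.1 + b.1, a.2 + b.2) < toLex (a'.1 + b'.1, a'.2 + b'.2) := by
  rcases Prod.Lex.toLex_le_toLex.1 h1 with h | ⟨h, h'⟩ <;>
  rcases Prod.Lex.toLex_lt_toLex.1 h2 with g | ⟨g, g'⟩ <;>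
  · refine Prod.Lex.toLex_lt_toLex.2 ?_; omega

lemma ladd_lt_le {a a' b b' : ℕ × ℕ} (h1 : toLex a < toLex a') (h2 : toLex b ≤ toLex b') :
    toLex (a.1 + b.1, a.2 + b.2) < toLex (a'.1 + b'.1, a'.2 + b'.2) := by
  rcases Prod.Lex.toLex_lt_toLex.1 h1 with h | ⟨h, h'⟩ <;>
  rcases Prod.Lex.toLex_le_toLex.1 h2 with g | ⟨g, g'⟩ <;>
  · refine Prod.Lex.toLex_lt_toLex.2 ?_; omega

variable {K : Type} [Field K]

def DegLe (p : FA K) (γ : ℕ × ℕ) : Prop := ∀ w ∈ p.support, bidegLex w ≤ toLex γ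
def DegLt (p : FA K) (γ : ℕ × ℕ) : Prop := ∀ w ∈ p.support, bidegLex w < toLex γ
def Homog (p : FA K) (γ : ℕ × ℕ) : Prop := ∀ w ∈ p.support, bidegLex w = toLex γ

lemma maxBideg_eq_of {p : FA K} {γ : ℕ × ℕ} (h1 : DegLe p γ)
    (h2 : ∃ w ∈ p.support, bidegLex w = toLex γ) : maxBideg K p = ↑(toLex γ) := by
  obtain ⟨w0, hw0, hdg⟩ := h2
  refine le_antisymm (Finset.max_le ?_) ?_
  · intro a ha
    obtain ⟨w, hw, rfl⟩ := Finset.mem_image.1 ha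
    exact_mod_cast h1 w hw
  · rw [← hdg]
    exact Finset.le_max (Finset.mem_image_of_mem _ hw0)

lemma degLe_of_maxBideg {p : FA K} {γ : ℕ × ℕ} (h : maxBideg K p = ↑(toLex γ)) : DegLe p γ := by
  intro w hw
  have h2 := Finset.le_max (Finset.mem_image_of_mem bidegLex hw)
  rw [show (p.support.image bidegLex).max = maxBideg K p from rfl, h] at h2
  exact_mod_cast h2

lemma exists_of_maxBideg {p : FA K} {γ : ℕ × ℕ} (h : maxBideg K p = ↑(toLex γ)) :
    ∃ w ∈ p.support, bidegLex w = toLex γ := by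
  have := Finset.mem_of_max h
  obtain ⟨w, hw, h2⟩ := Finset.mem_image.1 this
  exact ⟨w, hw, h2⟩

lemma degLt_of_maxBideg_lt {p : FA K} {γ : ℕ × ℕ} (h : maxBideg K p < ↑(toLex γ)) : DegLt p γ := by
  intro w hw
  have := Finset.le_max (Finset.mem_image_of_mem bidegLex hw)
  exact_mod_cast lt_of_le_of_lt this h

lemma maxBideg_ne_bot {p : FA K} (hp : p ≠ 0) : maxBideg K p ≠ ⊥ := by
  intro h
  rw [maxBideg, Finset.max_eq_bot, Finset.image_eq_empty, MAP.support_eq_empty] at h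
  exact hp h

lemma exists_pair_of_maxBideg {p : FA K} (hp : p ≠ 0) : ∃ γ : ℕ × ℕ, maxBideg K p = ↑(toLex γ) := by
  obtain ⟨γ, hγ⟩ := WithBot.ne_bot_iff_exists.1 (maxBideg_ne_bot hp)
  exact ⟨ofLex γ, hγ.symm⟩

open scoped Classical in
lemma lead_apply (p : FA K) (w : W3') :
    lead K p w = if (bidegLex w : WithBot (ℕ ×ₗ ℕ)) = maxBideg K p then p w else 0 := by
  rw [lead]
  convert Finsupp.filter_apply _ p.coeff w

lemma supp_lead_subset (p : FA K) : (lead K p).support ⊆ p.support := by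
  classical
  rw [lead]
  intro w hw
  rw [MonoidAlgebra.support, MonoidAlgebra.coeff_ofCoeff, Finsupp.support_filter, Finset.mem_filter] at hw
  exact hw.1

lemma homog_lead {p : FA K} {γ : ℕ × ℕ} (h : maxBideg K p = ↑(toLex γ)) :
    Homog (lead K p) γ := by
  classical
  intro w hw
  rw [lead, MonoidAlgebra.support, MonoidAlgebra.coeff_ofCoeff, Finsupp.support_filter, Finset.mem_filter] at hw
  have := hw.2
  rw [h] at this
  exact_mod_cast this

lemma lead_ne_zero {p : FA K} {γ : ℕ × ℕ} (h : maxBideg K p = ↑(toLex γ)) : lead K p ≠ 0 := by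
  classical
  obtain ⟨w, hw, hdg⟩ := exists_of_maxBideg h
  intro hz
  have : lead K p w = 0 := by rw [hz]; rfl
  rw [lead_apply, if_pos (by rw [h, hdg])] at this
  exact (MAP.mem_support_iff.1 hw) this

lemma lead_add_rest (p : FA K) :
    ∃ E : FA K, p = lead K p + E ∧ ∀ γ : ℕ × ℕ, maxBideg K p = ↑(toLex γ) → DegLt E γ := by
  classical
  refine ⟨MonoidAlgebra.ofCoeff (Finsupp.filter (fun w => ¬ ((bidegLex w : WithBot (ℕ ×ₗ ℕ)) = maxBideg K p)) p.coeff),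
    ?_, ?_⟩
  · rw [lead]
    exact MonoidAlgebra.coeff_injective (Finsupp.filter_pos_add_filter_neg p.coeff _).symm
  · intro γ hγ w hw
    rw [MonoidAlgebra.support, MonoidAlgebra.coeff_ofCoeff, Finsupp.support_filter, Finset.mem_filter] at hw
    have h1 := degLe_of_maxBideg hγ w hw.1
    have h2 : bidegLex w ≠ toLex γ := by
      intro he
      exact hw.2 (by rw [hγ, he])
    exact lt_of_le_of_ne h1 h2

lemma recog {H E : FA K} {γ : ℕ × ℕ} (hH : Homog H γ) (hne : H ≠ 0) (hE : DegLt E γ) :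
    maxBideg K (H + E) = ↑(toLex γ) ∧ lead K (H + E) = H := by
  classical
  have hEz : ∀ w : W3', bidegLex w = toLex γ → E w = 0 := by
    intro w hw
    by_contra h
    exact absurd hw (ne_of_lt (hE w (MAP.mem_support_iff.2 h)))
  have hmax : maxBideg K (H + E) = ↑(toLex γ) := by
    apply maxBideg_eq_of
    · intro w hw
      rcases Finset.mem_union.1 (MAP.support_add hw) with h | h
      · exact le_of_eq (hH w h)
      · exact le_of_lt (hE w h)
    · obtain ⟨w0, hw0⟩ := MAP.support_nonempty_iff.2 hne
      refine ⟨w0, ?_, hH w0 hw0⟩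
      rw [MAP.mem_support_iff, MAP.add_apply, hEz w0 (hH w0 hw0), add_zero]
      exact MAP.mem_support_iff.1 hw0
  refine ⟨hmax, ?_⟩
  ext w
  rw [lead_apply, hmax]
  by_cases h : bidegLex w = toLex γ
  · rw [if_pos (by exact_mod_cast h), MAP.add_apply, hEz w h, add_zero]
  · rw [if_neg (by exact_mod_cast h)]
    by_contra hc
    exact h (hH w (MAP.mem_support_iff.2 fun h0 => (Ne.symm hc) h0))

lemma recog2 {q r H : FA K} {γ : ℕ × ℕ} (hq : maxBideg K q = ↑(toLex γ)) (hl : lead K q = H)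
    (hr : DegLt r γ) : maxBideg K (q + r) = ↑(toLex γ) ∧ lead K (q + r) = H := by
  obtain ⟨E, hE1, hE2⟩ := lead_add_rest (K := K) q
  have hsum : q + r = H + (E + r) := by
    rw [← hl]
    conv_lhs => rw [hE1]
    rw [add_assoc]
  rw [hsum]
  refine recog (hl ▸ homog_lead hq) (hl ▸ lead_ne_zero hq) ?_
  classical
  intro w hw
  rcases Finset.mem_union.1 (MAP.support_add hw) with h | h
  · exact hE2 γ hq w h
  · exact hr w h

lemma degLt_add {a b : FA K} {γ : ℕ × ℕ} (ha : DegLt a γ) (hb : DegLt b γ) : DegLt (a + b) γ := by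
  classical
  intro w hw
  rcases Finset.mem_union.1 (MAP.support_add hw) with h | h
  · exact ha w h
  · exact hb w h

lemma degLt_smul {a : FA K} {γ : ℕ × ℕ} (c : K) (ha : DegLt a γ) : DegLt (c • a) γ :=
  fun w hw => ha w (MAP.support_smul hw)

lemma degLe_mul {a b : FA K} {γ δ : ℕ × ℕ} (ha : DegLe a γ) (hb : DegLe b δ) :
    DegLe (a * b) (γ.1 + δ.1, γ.2 + δ.2) := by
  classical
  intro w hw
  obtain ⟨u, hu, v, hv, rfl⟩ := Finset.mem_mul.1 (MAP.support_mul a b hw)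
  rw [bidegLex_eq, dg_mul]
  exact ladd_le_le (ha u hu) (hb v hv)

lemma degLe_mul_degLt {a b : FA K} {γ δ : ℕ × ℕ} (ha : DegLe a γ) (hb : DegLt b δ) :
    DegLt (a * b) (γ.1 + δ.1, γ.2 + δ.2) := by
  classical
  intro w hw
  obtain ⟨u, hu, v, hv, rfl⟩ := Finset.mem_mul.1 (MAP.support_mul a b hw)
  rw [bidegLex_eq, dg_mul]
  exact ladd_le_lt (ha u hu) (hb v hv)

lemma degLt_mul_degLe {a b : FA K} {γ δ : ℕ × ℕ} (ha : DegLt a γ) (hb : DegLe b δ) :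
    DegLt (a * b) (γ.1 + δ.1, γ.2 + δ.2) := by
  classical
  intro w hw
  obtain ⟨u, hu, v, hv, rfl⟩ := Finset.mem_mul.1 (MAP.support_mul a b hw)
  rw [bidegLex_eq, dg_mul]
  exact ladd_lt_le (ha u hu) (hb v hv)

lemma homog_mul {a b : FA K} {γ δ : ℕ × ℕ} (ha : Homog a γ) (hb : Homog b δ) :
    Homog (a * b) (γ.1 + δ.1, γ.2 + δ.2) := by
  classical
  intro w hw
  obtain ⟨u, hu, v, hv, rfl⟩ := Finset.mem_mul.1 (MAP.support_mul a b hw)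
  rw [bidegLex_eq, dg_mul]
  have h1 := ha u hu; have h2 := hb v hv
  rw [bidegLex_eq] at h1 h2
  have e1 : dg u = γ := toLex.injective h1
  have e2 : dg v = δ := toLex.injective h2
  rw [e1, e2]

lemma degLt_finsetSum {ι : Type*} {s : Finset ι} {f : ι → FA K} {γ : ℕ × ℕ}
    (h : ∀ i ∈ s, DegLt (f i) γ) : DegLt (∑ i ∈ s, f i) γ := by
  classical
  induction s using Finset.induction_on with
  | empty => intro w hw; simp at hw
  | insert a s' hni ih =>
      rw [Finset.sum_insert hni]
      exact degLt_add (h a (Finset.mem_insert_self a s'))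
        (ih fun i hi => h i (Finset.mem_insert_of_mem hi))

lemma homog_single {w : W3'} {c : K} : Homog (MonoidAlgebra.single w c : FA K) (dg w) := by
  intro u hu
  have := MAP.support_single_subset hu
  simp only [Finset.mem_singleton] at this
  rw [this, bidegLex_eq]

lemma lead_smul {p : FA K} {γ : ℕ × ℕ} (c : K) (hc : c ≠ 0) (h : maxBideg K p = ↑(toLex γ)) :
    maxBideg K (c • p) = ↑(toLex γ) ∧ lead K (c • p) = c • lead K p := by
  obtain ⟨E, hE1, hE2⟩ := lead_add_rest (K := K) p
  have heq : c • p = c • lead K p + c • E := by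
    conv_lhs => rw [hE1]
    rw [smul_add]
  rw [heq]
  refine recog ?_ ?_ (degLt_smul c (hE2 γ h))
  · intro w hw
    exact homog_lead h w (MAP.support_smul hw)
  · exact smul_ne_zero hc (lead_ne_zero h)
lemma list_lt_iff_lex (l l' : List (Fin 3)) : l < l' ↔ List.Lex (· < ·) l l' := Iff.rfl

lemma lex_append_right : ∀ {l1 l2 : List (Fin 3)}, List.Lex (· < ·) l1 l2 →
    l1.length = l2.length → ∀ w, List.Lex (· < ·) (l1 ++ w) (l2 ++ w) := by
  intro l1 l2 h
  induction h with
  | nil => intro hlen; simp at hlen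
  | @rel a l1' b l2' hab => intro hlen w; exact List.Lex.rel hab
  | @cons a l1' l2' h ih =>
      intro hlen w
      exact List.Lex.cons (ih (by simpa using hlen) w)

/-- The key used to order words: (length, lex order on lists). -/
def keyF (w : W3') : ℕ ×ₗ List (Fin 3) := toLex (FreeMonoid.toList w |>.length, FreeMonoid.toList w)

lemma keyF_injective : Function.Injective keyF := by
  intro u v h
  have h2 := congrArg (fun x => (ofLex x).2) h
  simpa [keyF] using FreeMonoid.toList.injective h2

lemma keyF_lt_mul_left {u v : W3'} (w : W3') (h : keyF u < keyF v) : keyF (w * u) < keyF (w * v) := by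
  rcases Prod.Lex.toLex_lt_toLex.1 h with h1 | ⟨h1, h2⟩
  · exact Prod.Lex.toLex_lt_toLex.2 (Or.inl (by simp [FreeMonoid.toList_mul]; omega))
  · refine Prod.Lex.toLex_lt_toLex.2 (Or.inr ⟨by simp [FreeMonoid.toList_mul]; omega, ?_⟩)
    simp only [FreeMonoid.toList_mul]
    exact (list_lt_iff_lex _ _).2 (List.Lex.append_left _ ((list_lt_iff_lex _ _).1 h2) _)

lemma keyF_lt_mul_right {u v : W3'} (w : W3') (h : keyF u < keyF v) : keyF (u * w) < keyF (v * w) := by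
  rcases Prod.Lex.toLex_lt_toLex.1 h with h1 | ⟨h1, h2⟩
  · exact Prod.Lex.toLex_lt_toLex.2 (Or.inl (by simp [FreeMonoid.toList_mul]; omega))
  · refine Prod.Lex.toLex_lt_toLex.2 (Or.inr ⟨by simp [FreeMonoid.toList_mul]; omega, ?_⟩)
    simp only [FreeMonoid.toList_mul]
    exact (list_lt_iff_lex _ _).2 (lex_append_right ((list_lt_iff_lex _ _).1 h2) h1 _)

lemma keyF_le_mul_left {u v : W3'} (w : W3') (h : keyF u ≤ keyF v) : keyF (w * u) ≤ keyF (w * v) := by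
  rcases h.lt_or_eq with h | h
  · exact (keyF_lt_mul_left w h).le
  · rw [keyF_injective h]

lemma keyF_le_mul_right {u v : W3'} (w : W3') (h : keyF u ≤ keyF v) : keyF (u * w) ≤ keyF (v * w) := by
  rcases h.lt_or_eq with h | h
  · exact (keyF_lt_mul_right w h).le
  · rw [keyF_injective h]

lemma keyF_mul_le_mul {u v u' v' : W3'} (h1 : keyF u ≤ keyF u') (h2 : keyF v ≤ keyF v') :
    keyF (u * v) ≤ keyF (u' * v') :=
  (keyF_le_mul_left u h2).trans (keyF_le_mul_right v' h1)

end

variable {K : Type} [Field K]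

/-- the substitution y ↦ u -/
noncomputable def SY (u : FA K) : FA K →ₐ[K] FA K := subst K ![Xv K 0, u, Xv K 2]

lemma subst_Xv (f : Fin 3 → FA K) (i : Fin 3) : subst K f (Xv K i) = f i := by
  rw [subst, Xv, MonoidAlgebra.lift_of, FreeMonoid.lift_eval_of]

lemma SY_y (u : FA K) : SY u (Xv K 1) = u := by rw [SY, subst_Xv]; rfl
lemma SY_z (u : FA K) : SY u (Xv K 2) = Xv K 2 := by rw [SY, subst_Xv]; rfl

lemma monomial_prod (L : List (Fin 3)) :
    (MonoidAlgebra.single (FreeMonoid.ofList L) (1 : K) : FA K) = (L.map (Xv K)).prod := by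
  induction L with
  | nil => exact MonoidAlgebra.one_def.symm
  | cons c L' ih =>
      have h0 : FreeMonoid.ofList (c :: L') = FreeMonoid.of c * FreeMonoid.ofList L' := rfl
      rw [h0, List.map_cons, List.prod_cons, ← ih, Xv]
      rw [show (MonoidAlgebra.of K (FreeMonoid (Fin 3))) (FreeMonoid.of c)
        = MonoidAlgebra.single (FreeMonoid.of c) (1:K) from rfl]
      rw [MonoidAlgebra.single_mul_single, one_mul]

lemma algHom_single (χ : FA K →ₐ[K] FA K) (w : FreeMonoid (Fin 3)) (c : K) :
    χ (MonoidAlgebra.single w c) = c • (((FreeMonoid.toList w).map (fun i => χ (Xv K i))).prod) := by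
  have h1 : (MonoidAlgebra.single w c : FA K) = c • MonoidAlgebra.single w (1 : K) := by
    rw [MonoidAlgebra.smul_single, smul_eq_mul, mul_one]
  rw [h1, map_smul]
  congr 1
  rw [show w = FreeMonoid.ofList (FreeMonoid.toList w) from (FreeMonoid.ofList_toList w).symm]
  rw [monomial_prod, map_list_prod, List.map_map]
  simp only [FreeMonoid.toList_ofList]
  rfl

/-- leading-word multiplication lemma -/
lemma multop {p q : FA K} {tp tq : FreeMonoid (Fin 3)} (hp : p tp ≠ 0)
    (hpd : ∀ w ∈ p.support, keyF w ≤ keyF tp) (hq : q tq ≠ 0)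
    (hqd : ∀ w ∈ q.support, keyF w ≤ keyF tq) :
    (p * q) (tp * tq) = p tp * q tq ∧ ∀ w ∈ (p * q).support, keyF w ≤ keyF (tp * tq) := by
  classical
  have key : ∀ a ∈ p.support, ∀ b ∈ q.support, a * b = tp * tq → a = tp ∧ b = tq := by
    intro a ha b hb hab
    by_cases h1 : a = tp
    · subst h1
      refine ⟨rfl, ?_⟩
      by_contra h2
      have hlt : keyF b < keyF tq :=
        lt_of_le_of_ne (hqd b hb) (fun h => h2 (keyF_injective h))
      have := keyF_lt_mul_left a hlt
      rw [hab] at this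
      exact lt_irrefl _ this
    · exfalso
      have hlt : keyF a < keyF tp :=
        lt_of_le_of_ne (hpd a ha) (fun h => h1 (keyF_injective h))
      have h3 : keyF (a * b) < keyF (tp * b) := keyF_lt_mul_right b hlt
      have h4 : keyF (tp * b) ≤ keyF (tp * tq) := keyF_le_mul_left tp (hqd b hb)
      rw [hab] at h3
      exact lt_irrefl _ (lt_of_lt_of_le h3 h4)
  constructor
  · rw [MonoidAlgebra.coeff_mul, Finsupp.sum]
    rw [Finset.sum_eq_single_of_mem tp (MAP.mem_support_iff.2 hp)]
    · rw [Finsupp.sum]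
      rw [Finset.sum_eq_single_of_mem tq (MAP.mem_support_iff.2 hq)]
      · rw [if_pos rfl]
      · intro b hb hbne
        rw [if_neg]
        intro he
        exact hbne (key tp (MAP.mem_support_iff.2 hp) b hb he).2
    · intro a ha hane
      rw [Finsupp.sum]
      apply Finset.sum_eq_zero
      intro b hb
      rw [if_neg]
      intro he
      exact hane (key a ha b hb he).1
  · intro w hw
    obtain ⟨u, hu, v, hv, rfl⟩ := Finset.mem_mul.1 (MAP.support_mul p q hw)
    exact keyF_mul_le_mul (hpd u hu) (hqd v hv)

/-- word-level substitution -/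
def sigm (m : List (Fin 3)) (L : List (Fin 3)) : List (Fin 3) :=
  L.flatMap fun c => if c = 1 then m else [c]

lemma sigm_cons (m : List (Fin 3)) (c : Fin 3) (L : List (Fin 3)) :
    sigm m (c :: L) = (if c = 1 then m else [c]) ++ sigm m L := by
  simp [sigm]

lemma sigm_append (m : List (Fin 3)) (L1 L2 : List (Fin 3)) :
    sigm m (L1 ++ L2) = sigm m L1 ++ sigm m L2 := by
  simp [sigm]

lemma SY_single_cons (u : FA K) (c : Fin 3) (L : List (Fin 3)) :
    SY u (MonoidAlgebra.single (FreeMonoid.ofList (c :: L)) (1:K)) =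
      (![Xv K 0, u, Xv K 2] c) * SY u (MonoidAlgebra.single (FreeMonoid.ofList L) (1:K)) := by
  have h1 : (MonoidAlgebra.single (FreeMonoid.ofList (c :: L)) (1:K) : FA K) =
      MonoidAlgebra.single (FreeMonoid.of c) (1:K) *
        MonoidAlgebra.single (FreeMonoid.ofList L) (1:K) := by
    rw [MonoidAlgebra.single_mul_single, one_mul]
    rfl
  rw [h1, map_mul]
  congr 1
  rw [show (MonoidAlgebra.single (FreeMonoid.of c) (1:K) : FA K) = Xv K c from rfl, SY, subst_Xv]

lemma rtop {s' : FA K} {m : FreeMonoid (Fin 3)} (hm : s' m ≠ 0)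
    (hmd : ∀ w ∈ s'.support, keyF w ≤ keyF m) :
    ∀ L : List (Fin 3), (∀ c ∈ L, c = 1 ∨ c = 2) →
      (SY s' (MonoidAlgebra.single (FreeMonoid.ofList L) (1:K)))
          (FreeMonoid.ofList (sigm (FreeMonoid.toList m) L)) = (s' m) ^ (L.count 1) ∧
      ∀ w ∈ (SY s' (MonoidAlgebra.single (FreeMonoid.ofList L) (1:K))).support,
        keyF w ≤ keyF (FreeMonoid.ofList (sigm (FreeMonoid.toList m) L)) := by
  intro L
  induction L with
  | nil =>
      intro _
      have h1 : (MonoidAlgebra.single (FreeMonoid.ofList ([] : List (Fin 3))) (1:K) : FA K) = 1 :=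
        MonoidAlgebra.one_def.symm
      have h2 : FreeMonoid.ofList (sigm (FreeMonoid.toList m) []) = (1 : FreeMonoid (Fin 3)) := rfl
      have hone : (1 : FA K) = MonoidAlgebra.single (1 : FreeMonoid (Fin 3)) (1:K) :=
        MonoidAlgebra.one_def
      have e1 : SY s' (MonoidAlgebra.single (FreeMonoid.ofList ([] : List (Fin 3))) (1:K))
          = 1 := by rw [h1]; exact map_one _
      rw [e1, h2]
      constructor
      · rw [List.count_nil, pow_zero, hone]
        exact MAP.single_eq_same
      · intro w hw
        rw [hone] at hw
        have h3 := MAP.support_single_subset hw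
        simp only [Finset.mem_singleton] at h3
        rw [h3]
  | cons c L' ih =>
      intro hYZ
      have hYZ' : ∀ a ∈ L', a = 1 ∨ a = 2 := fun a ha => hYZ a (List.mem_cons_of_mem c ha)
      obtain ⟨ih1, ih2⟩ := ih hYZ'
      rcases hYZ c ((List.mem_cons_self (a := c) (l := L'))) with rfl | rfl
      · -- c = 1 : multiply by s'
        rw [SY_single_cons]
        have hms : FreeMonoid.ofList (sigm (FreeMonoid.toList m) (1 :: L')) =
            m * FreeMonoid.ofList (sigm (FreeMonoid.toList m) L') := by
          rw [sigm_cons, if_pos rfl]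
          rw [show m = FreeMonoid.ofList (FreeMonoid.toList m) from
            (FreeMonoid.ofList_toList m).symm]
          rfl
        have hprod := multop hm hmd (ih1 ▸ pow_ne_zero _ hm) ih2
        constructor
        · rw [hms]
          rw [show (![Xv K 0, s', Xv K 2] 1) = s' from rfl]
          rw [hprod.1, ih1, List.count_cons]
          simp [pow_succ, mul_comm]
        · rw [hms]
          intro w hw
          exact hprod.2 w (by rwa [show (![Xv K 0, s', Xv K 2] 1) = s' from rfl] at hw)
      · -- c = 2 : multiply by z
        rw [SY_single_cons]
        have hz : (![Xv K 0, s', Xv K 2] 2) = Xv K 2 := rfl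
        rw [hz]
        have hzc : (Xv K 2 : FA K) (FreeMonoid.of 2) ≠ 0 := by
          rw [show (Xv K 2 : FA K) = MonoidAlgebra.single (FreeMonoid.of 2) (1:K) from rfl,
            MAP.single_eq_same]
          exact one_ne_zero
        have hzd : ∀ w ∈ (Xv K 2 : FA K).support, keyF w ≤ keyF (FreeMonoid.of 2) := by
          intro w hw
          have h3 := MAP.support_single_subset hw
          simp only [Finset.mem_singleton] at h3
          rw [h3]
        have hms : FreeMonoid.ofList (sigm (FreeMonoid.toList m) (2 :: L')) =
            FreeMonoid.of 2 * FreeMonoid.ofList (sigm (FreeMonoid.toList m) L') := by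
          rw [sigm_cons, if_neg (by decide)]
          rfl
        have hprod := multop hzc hzd (ih1 ▸ pow_ne_zero _ hm) ih2
        constructor
        · rw [hms, hprod.1, ih1, List.count_cons]
          have h5 : (Xv K 2 : FA K) (FreeMonoid.of 2) = 1 := by
            rw [show (Xv K 2 : FA K) = MonoidAlgebra.single (FreeMonoid.of 2) (1:K) from rfl,
              MAP.single_eq_same]
          rw [h5, one_mul]
          simp
        · rw [hms]
          exact hprod.2

/-! word coding: injectivity of `sigm m` on {1,2}-words when `m` has a letter ≠ 2 -/

def cnt (L : List (Fin 3)) : ℕ := L.countP (fun c => decide (c ≠ 2))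
def psi (L : List (Fin 3)) : ℕ := (L.takeWhile (fun c => c == 2)).length

lemma cnt_append (a b : List (Fin 3)) : cnt (a ++ b) = cnt a + cnt b := List.countP_append

lemma cnt_eq_zero {L : List (Fin 3)} (h : ∀ c ∈ L, c = 2) : cnt L = 0 := by
  rw [cnt, List.countP_eq_zero]
  intro a ha
  simpa using h a ha

lemma cnt_pos {L : List (Fin 3)} (h : ∃ c ∈ L, c ≠ 2) : 0 < cnt L := by
  rw [cnt, List.countP_pos_iff]
  simpa using h

lemma psi_cons2 (L : List (Fin 3)) : psi (2 :: L) = psi L + 1 := by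
  rw [psi, psi, List.takeWhile_cons, if_pos (by decide)]
  simp

lemma psi_cons_ne {c : Fin 3} (hc : c ≠ 2) (L : List (Fin 3)) : psi (c :: L) = 0 := by
  rw [psi, List.takeWhile_cons, if_neg (by simpa using hc)]
  rfl

lemma psi_append_of_has {m : List (Fin 3)} (hm : ∃ c ∈ m, c ≠ 2) (X : List (Fin 3)) :
    psi (m ++ X) = psi m := by
  induction m with
  | nil => obtain ⟨c, hc, _⟩ := hm; simp at hc
  | cons a m' ih =>
      by_cases ha : a = 2
      · subst ha
        rw [List.cons_append, psi_cons2, psi_cons2]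
        have hm' : ∃ c ∈ m', c ≠ 2 := by
          obtain ⟨c, hc, hcne⟩ := hm
          rcases List.mem_cons.1 hc with rfl | h
          · exact absurd rfl hcne
          · exact ⟨c, h, hcne⟩
        rw [ih hm']
      · rw [List.cons_append, psi_cons_ne ha, psi_cons_ne ha]

lemma psi_replicate_append (k : ℕ) (X : List (Fin 3)) :
    psi (List.replicate k 2 ++ X) = k + psi X := by
  induction k with
  | zero => simp
  | succ k ih =>
      rw [List.replicate_succ, List.cons_append, psi_cons2, ih]
      omega

lemma sigm_no1 {L : List (Fin 3)} (m : List (Fin 3)) (h : (1 : Fin 3) ∉ L) : sigm m L = L := by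
  induction L with
  | nil => rfl
  | cons c L' ih =>
      rw [sigm_cons, if_neg (by rintro rfl; exact h ((List.mem_cons_self (a := 1) (l := L')))),
        ih (fun hc => h (List.mem_cons_of_mem c hc))]
      rfl

lemma cnt_sigm {L : List (Fin 3)} (m : List (Fin 3)) (hYZ : ∀ c ∈ L, c = 1 ∨ c = 2) :
    cnt (sigm m L) = (L.count 1) * cnt m := by
  induction L with
  | nil => simp [sigm, cnt]
  | cons c L' ih =>
      have hYZ' : ∀ a ∈ L', a = 1 ∨ a = 2 := fun a ha => hYZ a (List.mem_cons_of_mem c ha)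
      rw [sigm_cons, cnt_append, ih hYZ', List.count_cons]
      rcases hYZ c ((List.mem_cons_self (a := c) (l := L'))) with rfl | rfl
      · rw [if_pos rfl]
        simp [add_mul, add_comm]
      · rw [if_neg (by decide)]
        have : cnt [(2 : Fin 3)] = 0 := by decide
        simp [this]

lemma decomp_of_mem1 : ∀ (L : List (Fin 3)), (∀ c ∈ L, c = 1 ∨ c = 2) → (1 : Fin 3) ∈ L →
    ∃ k T, L = List.replicate k 2 ++ 1 :: T ∧ (∀ c ∈ T, c = 1 ∨ c = 2) := by
  intro L
  induction L with
  | nil => intro _ h; simp at h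
  | cons c L' ih =>
      intro hYZ hmem
      have hYZ' : ∀ a ∈ L', a = 1 ∨ a = 2 := fun a ha => hYZ a (List.mem_cons_of_mem c ha)
      rcases hYZ c ((List.mem_cons_self (a := c) (l := L'))) with rfl | rfl
      · exact ⟨0, L', by simp, hYZ'⟩
      · have hmem' : (1 : Fin 3) ∈ L' := by
          rcases List.mem_cons.1 hmem with h | h
          · exact absurd h (by decide)
          · exact h
        obtain ⟨k, T, hLT, hT⟩ := ih hYZ' hmem'
        exact ⟨k + 1, T, by rw [List.replicate_succ, List.cons_append, hLT], hT⟩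

lemma sigm_inj {m : List (Fin 3)} (hm : ∃ c ∈ m, c ≠ 2) :
    ∀ (N : ℕ) (L1 L2 : List (Fin 3)), L1.length ≤ N →
      (∀ c ∈ L1, c = 1 ∨ c = 2) → (∀ c ∈ L2, c = 1 ∨ c = 2) →
      sigm m L1 = sigm m L2 → L1 = L2 := by
  intro N
  induction N with
  | zero =>
      intro L1 L2 hlen h1 h2 heq
      have hL1 : L1 = [] := List.length_eq_zero_iff.1 (Nat.le_zero.1 hlen)
      subst hL1
      by_cases hmem : (1 : Fin 3) ∈ L2
      · exfalso
        have hc : cnt (sigm m L2) = L2.count 1 * cnt m := cnt_sigm m h2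
        rw [← heq] at hc
        have : cnt (sigm m []) = 0 := by simp [sigm, cnt]
        rw [this] at hc
        have h3 : 0 < L2.count 1 := List.count_pos_iff.2 hmem
        have h4 : 0 < cnt m := cnt_pos hm
        nlinarith
      · rw [sigm_no1 m hmem] at heq
        exact heq
  | succ N ihN =>
      intro L1 L2 hlen h1 h2 heq
      by_cases hm1 : (1 : Fin 3) ∈ L1 <;> by_cases hm2 : (1 : Fin 3) ∈ L2
      · -- both contain 1
        obtain ⟨k1, T1, hL1, hT1⟩ := decomp_of_mem1 L1 h1 hm1
        obtain ⟨k2, T2, hL2, hT2⟩ := decomp_of_mem1 L2 h2 hm2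
        have hrep : ∀ (k : ℕ) (T : List (Fin 3)),
            sigm m (List.replicate k 2 ++ 1 :: T) = List.replicate k 2 ++ (m ++ sigm m T) := by
          intro k T
          rw [sigm_append, sigm_no1 m (by
            intro h
            have := List.eq_of_mem_replicate h
            exact absurd this (by decide)), sigm_cons, if_pos rfl]
        rw [hL1, hL2, hrep, hrep] at heq
        have hpsi := congrArg psi heq
        rw [psi_replicate_append, psi_replicate_append, psi_append_of_has hm,
          psi_append_of_has hm] at hpsi
        have hk : k1 = k2 := by omega
        subst hk
        have heq2 : m ++ sigm m T1 = m ++ sigm m T2 := List.append_cancel_left heq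
        have heq3 : sigm m T1 = sigm m T2 := List.append_cancel_left heq2
        have hlenT : T1.length ≤ N := by
          rw [hL1] at hlen
          simp [List.length_append] at hlen
          omega
        rw [hL1, hL2, ihN T1 T2 hlenT hT1 hT2 heq3]
      · exfalso
        have hc1 : cnt (sigm m L1) = L1.count 1 * cnt m := cnt_sigm m h1
        rw [heq, cnt_sigm m h2] at hc1
        have hz : L2.count 1 = 0 := List.count_eq_zero.2 hm2
        have h3 : 0 < L1.count 1 := List.count_pos_iff.2 hm1
        have h4 : 0 < cnt m := cnt_pos hm
        rw [hz] at hc1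
        nlinarith
      · exfalso
        have hc1 : cnt (sigm m L1) = L1.count 1 * cnt m := cnt_sigm m h1
        rw [heq, cnt_sigm m h2] at hc1
        have hz : L1.count 1 = 0 := List.count_eq_zero.2 hm1
        have h3 : 0 < L2.count 1 := List.count_pos_iff.2 hm2
        have h4 : 0 < cnt m := cnt_pos hm
        rw [hz] at hc1
        nlinarith
      · rw [sigm_no1 m hm1, sigm_no1 m hm2] at heq
        exact heq

lemma algHom_apply_sum (χ : FA K →ₐ[K] FA K) (h : FA K) :
    χ h = h.coeff.sum (fun w c => c • χ (MonoidAlgebra.single w (1:K))) := by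
  conv_lhs => rw [← MonoidAlgebra.sum_coeff_single h]
  rw [map_finsuppSum]
  congr 1
  ext w c
  have h1 : (MonoidAlgebra.single w c : FA K) = c • MonoidAlgebra.single w (1 : K) := by
    rw [MonoidAlgebra.smul_single, smul_eq_mul, mul_one]
  rw [h1, map_smul]

lemma nonvanish {s' h : FA K} {m : FreeMonoid (Fin 3)} (hm : s' m ≠ 0)
    (hmd : ∀ w ∈ s'.support, keyF w ≤ keyF m) (hm2 : ∃ c ∈ FreeMonoid.toList m, c ≠ 2)
    (hh : h ≠ 0) (hYZ : ∀ w ∈ h.support, ∀ c ∈ FreeMonoid.toList w, c = 1 ∨ c = 2) :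
    SY s' h ≠ 0 := by
  classical
  obtain ⟨ws, hws, hmax⟩ := Finset.exists_max_image h.support
    (fun w => keyF (FreeMonoid.ofList (sigm (FreeMonoid.toList m) (FreeMonoid.toList w))))
    (MAP.support_nonempty_iff.2 hh)
  intro hzero
  have happ : (SY s' h)
      (FreeMonoid.ofList (sigm (FreeMonoid.toList m) (FreeMonoid.toList ws))) = 0 := by
    rw [hzero]; rfl
  rw [algHom_apply_sum, Finsupp.sum, MAP.finset_sum_apply] at happ
  rw [Finset.sum_eq_single_of_mem ws hws] at happ
  · have hr := rtop hm hmd (FreeMonoid.toList ws) (hYZ ws hws)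
    rw [FreeMonoid.ofList_toList] at hr
    rw [MAP.smul_apply, hr.1] at happ
    exact (mul_ne_zero (MAP.mem_support_iff.1 hws)
      (pow_ne_zero _ hm)) (by simpa using happ)
  · intro w hw hne
    rw [MAP.smul_apply]
    have hr := rtop hm hmd (FreeMonoid.toList w) (hYZ w hw)
    rw [FreeMonoid.ofList_toList] at hr
    have hz : (SY s' (MonoidAlgebra.single w (1:K)))
        (FreeMonoid.ofList (sigm (FreeMonoid.toList m) (FreeMonoid.toList ws))) = 0 := by
      by_contra hnz
      have hmem := MAP.mem_support_iff.2 hnz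
      have h5 := hr.2 _ hmem
      have h6 := hmax w hw
      have h7 : keyF (FreeMonoid.ofList (sigm (FreeMonoid.toList m) (FreeMonoid.toList ws))) =
          keyF (FreeMonoid.ofList (sigm (FreeMonoid.toList m) (FreeMonoid.toList w))) :=
        le_antisymm h5 h6
      have h9 : sigm (FreeMonoid.toList m) (FreeMonoid.toList ws) =
          sigm (FreeMonoid.toList m) (FreeMonoid.toList w) :=
        FreeMonoid.ofList.injective (keyF_injective h7)
      have h10 := sigm_inj hm2 (FreeMonoid.toList ws).length _ _ le_rfl
        (hYZ ws hws) (hYZ w hw) h9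
      exact hne (FreeMonoid.toList.injective h10.symm)
    rw [hz, smul_zero]

lemma degLe_of_homog {p : FA K} {γ : ℕ × ℕ} (h : Homog p γ) : DegLe p γ :=
  fun w hw => le_of_eq (h w hw)

lemma degLe_of_parts {p A : FA K} {γ : ℕ × ℕ} (hA : Homog A γ) (hd : DegLt (p - A) γ) :
    DegLe p γ := by
  classical
  intro w hw
  have he : p = A + (p - A) := by abel
  rw [he] at hw
  rcases Finset.mem_union.1 (MAP.support_add hw) with h1 | h1
  · exact le_of_eq (hA w h1)
  · exact le_of_lt (hd w h1)

lemma degLt_mono {p : FA K} {γ δ : ℕ × ℕ} (h : DegLt p γ) (hle : toLex γ ≤ toLex δ) :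
    DegLt p δ := fun w hw => lt_of_lt_of_le (h w hw) hle

lemma dmono_le {a b A B d e : ℕ} (hd : 1 ≤ d) (h : toLex (a, b) ≤ toLex (A, B)) :
    toLex (a * d, a * e + b) ≤ toLex (A * d, A * e + B) := by
  have h' := Prod.Lex.toLex_le_toLex.1 h
  dsimp only at h'
  refine Prod.Lex.toLex_le_toLex.2 ?_
  dsimp only
  rcases h' with h1 | ⟨h1, h2⟩
  · exact Or.inl (by nlinarith)
  · subst h1
    exact Or.inr ⟨rfl, by omega⟩

lemma dmono_lt {a b A B d e : ℕ} (hd : 1 ≤ d) (h : toLex (a, b) < toLex (A, B)) :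
    toLex (a * d, a * e + b) < toLex (A * d, A * e + B) := by
  have h' := Prod.Lex.toLex_lt_toLex.1 h
  dsimp only at h'
  refine Prod.Lex.toLex_lt_toLex.2 ?_
  dsimp only
  rcases h' with h1 | ⟨h1, h2⟩
  · exact Or.inl (by nlinarith)
  · subst h1
    exact Or.inr ⟨rfl, by omega⟩

lemma homog_finsetSum {ι : Type*} {s : Finset ι} {f : ι → FA K} {γ : ℕ × ℕ}
    (h : ∀ i ∈ s, Homog (f i) γ) : Homog (∑ i ∈ s, f i) γ := by
  classical
  induction s using Finset.induction_on with
  | empty => intro w hw; simp at hw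
  | insert a s' hni ih =>
      rw [Finset.sum_insert hni]
      intro w hw
      rcases Finset.mem_union.1 (MAP.support_add hw) with h1 | h1
      · exact h a (Finset.mem_insert_self a s') w h1
      · exact ih (fun i hi => h i (Finset.mem_insert_of_mem hi)) w h1

/-- per-word analysis of the substitution y ↦ s -/
lemma wrd {s s' : FA K} {d e : ℕ} (hsle : DegLe s (d, e)) (hs'h : Homog s' (d, e))
    (hdiff : DegLt (s - s') (d, e)) :
    ∀ L : List (Fin 3), (∀ c ∈ L, c = 1 ∨ c = 2) →
      Homog (SY s' (MonoidAlgebra.single (FreeMonoid.ofList L) (1:K)))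
        (L.count 1 * d, L.count 1 * e + L.count 2) ∧
      DegLt (SY s (MonoidAlgebra.single (FreeMonoid.ofList L) (1:K)) -
          SY s' (MonoidAlgebra.single (FreeMonoid.ofList L) (1:K)))
        (L.count 1 * d, L.count 1 * e + L.count 2) := by
  intro L
  induction L with
  | nil =>
      intro _
      have h1 : ∀ u : FA K, SY u (MonoidAlgebra.single (FreeMonoid.ofList ([] : List (Fin 3)))
          (1:K)) = 1 := by
        intro u
        rw [show (MonoidAlgebra.single (FreeMonoid.ofList ([] : List (Fin 3))) (1:K) : FA K) = 1
          from MonoidAlgebra.one_def.symm]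
        exact map_one _
      rw [h1, h1]
      constructor
      · intro w hw
        rw [show (1 : FA K) = MonoidAlgebra.single (1 : FreeMonoid (Fin 3)) (1:K)
          from MonoidAlgebra.one_def] at hw
        have h3 := MAP.support_single_subset hw
        simp only [Finset.mem_singleton] at h3
        subst h3
        simp [bidegLex, List.count_nil]
      · rw [sub_self]
        intro w hw
        simp at hw
  | cons c L' ih =>
      intro hYZ
      have hYZ' : ∀ a ∈ L', a = 1 ∨ a = 2 := fun a ha => hYZ a (List.mem_cons_of_mem c ha)
      obtain ⟨ih1, ih2⟩ := ih hYZ'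
      have hle' : DegLe (SY s (MonoidAlgebra.single (FreeMonoid.ofList L') (1:K)))
          (L'.count 1 * d, L'.count 1 * e + L'.count 2) := degLe_of_parts ih1 ih2
      have hle'' : DegLe (SY s' (MonoidAlgebra.single (FreeMonoid.ofList L') (1:K)))
          (L'.count 1 * d, L'.count 1 * e + L'.count 2) := degLe_of_homog ih1
      rcases hYZ c ((List.mem_cons_self (a := c) (l := L'))) with rfl | rfl
      · -- c = 1
        rw [SY_single_cons, SY_single_cons,
          show (![Xv K 0, s, Xv K 2] 1) = s from rfl,
          show (![Xv K 0, s', Xv K 2] 1) = s' from rfl]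
        have hcount1 : (1 :: L').count 1 = L'.count 1 + 1 := by simp [List.count_cons]
        have hcount2 : (1 :: L').count 2 = L'.count 2 := by simp [List.count_cons]
        rw [hcount1, hcount2]
        constructor
        · have := homog_mul hs'h ih1
          have harith : ((d, e).1 + (L'.count 1 * d, L'.count 1 * e + L'.count 2).1,
              (d, e).2 + (L'.count 1 * d, L'.count 1 * e + L'.count 2).2)
              = ((L'.count 1 + 1) * d, (L'.count 1 + 1) * e + L'.count 2) := by
            simp; constructor <;> ring
          rwa [harith] at this
        · set T := SY s (MonoidAlgebra.single (FreeMonoid.ofList L') (1:K))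
          set T' := SY s' (MonoidAlgebra.single (FreeMonoid.ofList L') (1:K))
          have hsplit : s * T - s' * T' = s * (T - T') + (s - s') * T' := by
            noncomm_ring
          rw [hsplit]
          apply degLt_add
          · have := degLe_mul_degLt hsle ih2
            have harith : ((d, e).1 + (L'.count 1 * d, L'.count 1 * e + L'.count 2).1,
                (d, e).2 + (L'.count 1 * d, L'.count 1 * e + L'.count 2).2)
                = ((L'.count 1 + 1) * d, (L'.count 1 + 1) * e + L'.count 2) := by
              simp; constructor <;> ring
            rwa [harith] at this
          · have := degLt_mul_degLe hdiff hle''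
            have harith : ((d, e).1 + (L'.count 1 * d, L'.count 1 * e + L'.count 2).1,
                (d, e).2 + (L'.count 1 * d, L'.count 1 * e + L'.count 2).2)
                = ((L'.count 1 + 1) * d, (L'.count 1 + 1) * e + L'.count 2) := by
              simp; constructor <;> ring
            rwa [harith] at this
      · -- c = 2
        rw [SY_single_cons, SY_single_cons,
          show (![Xv K 0, s, Xv K 2] 2) = Xv K 2 from rfl,
          show (![Xv K 0, s', Xv K 2] 2) = Xv K 2 from rfl]
        have hcount1 : (2 :: L').count 1 = L'.count 1 := by simp [List.count_cons]
        have hcount2 : (2 :: L').count 2 = L'.count 2 + 1 := by simp [List.count_cons]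
        rw [hcount1, hcount2]
        have hzh : Homog (Xv K 2 : FA K) (0, 1) := by
          intro w hw
          have h3 := MAP.support_single_subset hw
          simp only [Finset.mem_singleton] at h3
          subst h3
          rfl
        constructor
        · have := homog_mul hzh ih1
          have harith : ((0, 1).1 + (L'.count 1 * d, L'.count 1 * e + L'.count 2).1,
              (0, 1).2 + (L'.count 1 * d, L'.count 1 * e + L'.count 2).2)
              = (L'.count 1 * d, L'.count 1 * e + (L'.count 2 + 1)) := by
            simp; ring
          rwa [harith] at this
        · set T := SY s (MonoidAlgebra.single (FreeMonoid.ofList L') (1:K))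
          set T' := SY s' (MonoidAlgebra.single (FreeMonoid.ofList L') (1:K))
          have hsplit : Xv K 2 * T - Xv K 2 * T' = Xv K 2 * (T - T') := by noncomm_ring
          rw [hsplit]
          have := degLe_mul_degLt (degLe_of_homog hzh) ih2
          have harith : ((0, 1).1 + (L'.count 1 * d, L'.count 1 * e + L'.count 2).1,
              (0, 1).2 + (L'.count 1 * d, L'.count 1 * e + L'.count 2).2)
              = (L'.count 1 * d, L'.count 1 * e + (L'.count 2 + 1)) := by
            simp; ring
          rwa [harith] at this

lemma dg_yz {w : FreeMonoid (Fin 3)} (h : ∀ c ∈ FreeMonoid.toList w, c = 1 ∨ c = 2) :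
    bidegLex w = toLex ((FreeMonoid.toList w).count 1, (FreeMonoid.toList w).count 2) := by
  have h0 : (FreeMonoid.toList w).count 0 = 0 := by
    rw [List.count_eq_zero]
    intro hmem
    rcases h 0 hmem with h1 | h1 <;> exact absurd h1 (by decide)
  rw [bidegLex, h0, zero_add]

lemma subMain {s h : FA K} {d e A B : ℕ} (hd : 1 ≤ d)
    (hs : maxBideg K s = ↑(toLex (d, e))) (hh : maxBideg K h = ↑(toLex (A, B)))
    (hYZ : ∀ w ∈ h.support, ∀ c ∈ FreeMonoid.toList w, c = 1 ∨ c = 2) :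
    maxBideg K (SY s h) = ↑(toLex (A * d, A * e + B)) ∧
    lead K (SY s h) = SY (lead K s) (lead K h) := by
  classical
  have hsle : DegLe s (d, e) := degLe_of_maxBideg hs
  have hs'h : Homog (lead K s) (d, e) := homog_lead hs
  have hdiff : DegLt (s - lead K s) (d, e) := by
    obtain ⟨E, hE1, hE2⟩ := lead_add_rest (K := K) s
    have h2 : E = s - lead K s := eq_sub_of_add_eq' hE1.symm
    rw [← h2]
    exact hE2 _ hs
  obtain ⟨Eh, hEh1, hEh2⟩ := lead_add_rest (K := K) h
  have hEhval : Eh = h - lead K h := eq_sub_of_add_eq' hEh1.symm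
  have hYZlead : ∀ w ∈ (lead K h).support, ∀ c ∈ FreeMonoid.toList w, c = 1 ∨ c = 2 :=
    fun w hw => hYZ w (supp_lead_subset h hw)
  have hYZE : ∀ w ∈ Eh.support, ∀ c ∈ FreeMonoid.toList w, c = 1 ∨ c = 2 := by
    intro w hw
    rw [hEhval] at hw
    rcases Finset.mem_union.1 (MAP.support_sub hw) with h1 | h1
    · exact hYZ w h1
    · exact hYZlead w h1
  -- counts of words in the support of lead h
  have hcounts : ∀ w ∈ (lead K h).support,
      (FreeMonoid.toList w).count 1 = A ∧ (FreeMonoid.toList w).count 2 = B := by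
    intro w hw
    have h1 := homog_lead hh w hw
    rw [dg_yz (hYZlead w hw)] at h1
    have h2 := toLex.injective h1
    exact ⟨congrArg Prod.fst h2, congrArg Prod.snd h2⟩
  -- Homogeneity of H = SY (lead s) (lead h)
  have hword : ∀ w ∈ (lead K h).support,
      Homog (SY (lead K s) (MonoidAlgebra.single w (1:K))) (A * d, A * e + B) := by
    intro w hw
    have hwrd := (wrd hsle hs'h hdiff (FreeMonoid.toList w) (hYZlead w hw)).1
    rw [FreeMonoid.ofList_toList, (hcounts w hw).1, (hcounts w hw).2] at hwrd
    exact hwrd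
  have hHhom : Homog (SY (lead K s) (lead K h)) (A * d, A * e + B) := by
    rw [algHom_apply_sum, Finsupp.sum]
    apply homog_finsetSum
    intro i hi w hw
    exact hword i hi w (MAP.support_smul hw)
  -- Nonvanishing of H
  have hsne : lead K s ≠ 0 := lead_ne_zero hs
  obtain ⟨m, hmmem, hmd⟩ := Finset.exists_max_image (lead K s).support keyF
    (MAP.support_nonempty_iff.2 hsne)
  have hm : lead K s m ≠ 0 := MAP.mem_support_iff.1 hmmem
  have hm2 : ∃ c ∈ FreeMonoid.toList m, c ≠ 2 := by
    by_contra hc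
    push_neg at hc
    have h1 := hs'h m hmmem
    rw [bidegLex] at h1
    have h0 : (FreeMonoid.toList m).count 0 = 0 := by
      rw [List.count_eq_zero]; intro hmem; exact absurd (hc 0 hmem) (by decide)
    have h1' : (FreeMonoid.toList m).count 1 = 0 := by
      rw [List.count_eq_zero]; intro hmem; exact absurd (hc 1 hmem) (by decide)
    rw [h0, h1'] at h1
    have := congrArg Prod.fst (toLex.injective h1)
    simp at this
    omega
  have hHne : SY (lead K s) (lead K h) ≠ 0 :=
    nonvanish hm hmd hm2 (lead_ne_zero hh) hYZlead
  -- Error terms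
  have hE2lt : DegLt (SY (lead K s) Eh) (A * d, A * e + B) := by
    rw [algHom_apply_sum, Finsupp.sum]
    apply degLt_finsetSum
    intro w hw
    have hyzw := hYZE w hw
    have hblt := hEh2 _ hh w hw
    rw [dg_yz hyzw] at hblt
    have hwrd := (wrd hsle hs'h hdiff (FreeMonoid.toList w) hyzw).1
    rw [FreeMonoid.ofList_toList] at hwrd
    intro u hu
    rw [hwrd u (MAP.support_smul hu)]
    exact dmono_lt hd hblt
  have hE1lt : DegLt (SY s h - SY (lead K s) h) (A * d, A * e + B) := by
    have hsum : SY s h - SY (lead K s) h = h.coeff.sum (fun w c =>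
        c • (SY s (MonoidAlgebra.single w (1:K)) - SY (lead K s) (MonoidAlgebra.single w (1:K)))) := by
      rw [algHom_apply_sum (SY s) h, algHom_apply_sum (SY (lead K s)) h,
        Finsupp.sum, Finsupp.sum, Finsupp.sum, ← Finset.sum_sub_distrib]
      congr 1
      ext w
      rw [smul_sub]
    rw [hsum, Finsupp.sum]
    apply degLt_finsetSum
    intro w hw
    have hyzw := hYZ w hw
    have hble : bidegLex w ≤ toLex (A, B) := degLe_of_maxBideg hh w hw
    rw [dg_yz hyzw] at hble
    have hwrd := (wrd hsle hs'h hdiff (FreeMonoid.toList w) hyzw).2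
    rw [FreeMonoid.ofList_toList] at hwrd
    have h5 := degLt_mono hwrd (dmono_le hd hble)
    exact fun u hu => h5 u (MAP.support_smul hu)
  -- assemble
  have hEq : SY s h = SY (lead K s) (lead K h) +
      ((SY s h - SY (lead K s) h) + (SY (lead K s) Eh)) := by
    have h6 : SY (lead K s) Eh = SY (lead K s) h - SY (lead K s) (lead K h) := by
      rw [hEhval, map_sub]
    rw [h6]
    abel
  rw [hEq]
  exact recog hHhom hHne (degLt_add hE1lt hE2lt)

lemma yz_supp {p : FA K} (hp : p ∈ Algebra.adjoin K {Xv K 1, Xv K 2}) :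
    ∀ w ∈ p.support, ∀ c ∈ FreeMonoid.toList w, c = 1 ∨ c = 2 := by
  classical
  induction hp using Algebra.adjoin_induction with
  | mem a ha =>
      rcases ha with rfl | ha
      · intro w hw
        have h3 := MAP.support_single_subset hw
        simp only [Finset.mem_singleton] at h3
        subst h3
        intro c hc
        simp only [FreeMonoid.toList_of, List.mem_singleton] at hc
        exact Or.inl hc
      · simp only [Set.mem_singleton_iff] at ha
        subst ha
        intro w hw
        have h3 := MAP.support_single_subset hw
        simp only [Finset.mem_singleton] at h3
        subst h3
        intro c hc
        simp only [FreeMonoid.toList_of, List.mem_singleton] at hc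
        exact Or.inr hc
  | algebraMap r =>
      intro w hw
      have h4 : (algebraMap K (FA K)) r = MonoidAlgebra.single 1 r := rfl
      rw [h4] at hw
      have h3 := MAP.support_single_subset hw
      simp only [Finset.mem_singleton] at h3
      subst h3
      intro c hc
      simp at hc
  | add a b ha hb iha ihb =>
      intro w hw
      rcases Finset.mem_union.1 (MAP.support_add hw) with h1 | h1
      · exact iha w h1
      · exact ihb w h1
  | mul a b ha hb iha ihb =>
      intro w hw
      obtain ⟨u, hu, v, hv, rfl⟩ := Finset.mem_mul.1 (MAP.support_mul a b hw)
      intro c hc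
      rw [FreeMonoid.toList_mul, List.mem_append] at hc
      rcases hc with h1 | h1
      · exact iha u hu c h1
      · exact ihb v hv c h1

lemma z_supp {p : FA K} (hp : p ∈ Algebra.adjoin K {Xv K 2}) :
    ∀ w ∈ p.support, ∀ c ∈ FreeMonoid.toList w, c = 2 := by
  classical
  induction hp using Algebra.adjoin_induction with
  | mem a ha =>
      simp only [Set.mem_singleton_iff] at ha
      subst ha
      intro w hw
      have h3 := MAP.support_single_subset hw
      simp only [Finset.mem_singleton] at h3
      subst h3
      intro c hc
      simpa using hc
  | algebraMap r =>
      intro w hw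
      have h4 : (algebraMap K (FA K)) r = MonoidAlgebra.single 1 r := rfl
      rw [h4] at hw
      have h3 := MAP.support_single_subset hw
      simp only [Finset.mem_singleton] at h3
      subst h3
      intro c hc
      simp at hc
  | add a b ha hb iha ihb =>
      intro w hw
      rcases Finset.mem_union.1 (MAP.support_add hw) with h1 | h1
      · exact iha w h1
      · exact ihb w h1
  | mul a b ha hb iha ihb =>
      intro w hw
      obtain ⟨u, hu, v, hv, rfl⟩ := Finset.mem_mul.1 (MAP.support_mul a b hw)
      intro c hc
      rw [FreeMonoid.toList_mul, List.mem_append] at hc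
      rcases hc with h1 | h1
      · exact iha u hu c h1
      · exact ihb v hv c h1

lemma z_mem_of_supp {p : FA K} (h : ∀ w ∈ p.support, ∀ c ∈ FreeMonoid.toList w, c = 2) :
    p ∈ Algebra.adjoin K {Xv K 2} := by
  classical
  rw [← MonoidAlgebra.sum_coeff_single p, Finsupp.sum]
  apply Subalgebra.sum_mem
  intro w hw
  have h1 : (MonoidAlgebra.single w (p w) : FA K) = (p w) • MonoidAlgebra.single w (1:K) := by
    rw [MonoidAlgebra.smul_single, smul_eq_mul, mul_one]
  rw [h1]
  apply Subalgebra.smul_mem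
  rw [show w = FreeMonoid.ofList (FreeMonoid.toList w) from (FreeMonoid.ofList_toList w).symm,
    monomial_prod]
  apply list_prod_mem
  intro x hx
  rw [List.mem_map] at hx
  obtain ⟨c, hc, rfl⟩ := hx
  rw [h w hw c (by simpa using hc)]
  exact Algebra.subset_adjoin rfl

lemma smul_single_one (c : K) (w : FreeMonoid (Fin 3)) :
    (c • MonoidAlgebra.single w (1:K) : FA K) = MonoidAlgebra.single w c := by
  rw [MonoidAlgebra.smul_single, smul_eq_mul, mul_one]

lemma eval_yz (χ : FA K ≃ₐ[K] FA K) {u : FA K} (hy : χ (Xv K 1) = u)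
    (hz : χ (Xv K 2) = Xv K 2) {h : FA K}
    (hYZ : ∀ w ∈ h.support, ∀ c ∈ FreeMonoid.toList w, c = 1 ∨ c = 2) :
    χ h = SY u h := by
  have hχ : χ h = χ.toAlgHom h := rfl
  rw [hχ, algHom_apply_sum χ.toAlgHom h, algHom_apply_sum (SY u) h]
  apply Finsupp.sum_congr
  intro w hw
  have h2 : List.map (fun i => χ.toAlgHom (Xv K i)) (FreeMonoid.toList w) =
      List.map (fun i => SY u (Xv K i)) (FreeMonoid.toList w) := by
    apply List.map_congr_left
    intro c hc
    rcases hYZ w hw c hc with rfl | rfl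
    · show χ (Xv K 1) = _
      rw [hy, SY_y]
    · show χ (Xv K 2) = _
      rw [hz, SY_z]
  rw [algHom_single, algHom_single, h2]

lemma eval_z (χ : FA K ≃ₐ[K] FA K) (hz : χ (Xv K 2) = Xv K 2) {r : FA K}
    (hsupp : ∀ w ∈ r.support, ∀ c ∈ FreeMonoid.toList w, c = 2) :
    χ r = r := by
  have hχ : χ r = χ.toAlgHom r := rfl
  rw [hχ, algHom_apply_sum χ.toAlgHom r]
  conv_rhs => rw [← MonoidAlgebra.sum_coeff_single r]
  apply Finsupp.sum_congr
  intro w hw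
  have h2 : ((FreeMonoid.toList w).map (fun i => χ.toAlgHom (Xv K i))).prod =
      ((FreeMonoid.toList w).map (Xv K)).prod := by
    congr 1
    apply List.map_congr_left
    intro c hc
    rw [hsupp w hw c hc]
    exact hz
  rw [algHom_single, h2, ← monomial_prod, FreeMonoid.ofList_toList]
  rw [one_smul]
  exact smul_single_one (r w) w

lemma SY_id (q : FA K) : SY (Xv K 1) q = q := by
  have hXv : ∀ i : Fin 3, SY (Xv K 1) (Xv K i) = Xv K i := by
    intro i
    rw [SY, subst_Xv]
    fin_cases i <;> rfl
  rw [algHom_apply_sum (SY (Xv K 1)) q]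
  conv_rhs => rw [← MonoidAlgebra.sum_coeff_single q]
  apply Finsupp.sum_congr
  intro w hw
  have h2 : ((FreeMonoid.toList w).map (fun i => SY (Xv K 1) (Xv K i))).prod =
      ((FreeMonoid.toList w).map (Xv K)).prod := by
    congr 1
    exact List.map_congr_left (fun c _ => hXv c)
  rw [algHom_single, h2, ← monomial_prod, FreeMonoid.ofList_toList]
  rw [one_smul]
  exact smul_single_one (q w) w

lemma maxBideg_lead_of_homog {p : FA K} {γ : ℕ × ℕ} (hH : Homog p γ) (hne : p ≠ 0) :
    maxBideg K p = ↑(toLex γ) ∧ lead K p = p := by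
  have h := recog hH hne (E := 0) (fun w hw => by simp at hw)
  rwa [add_zero] at h

lemma Xv_ne_zero (i : Fin 3) : (Xv K i) ≠ 0 :=
  fun h => one_ne_zero (MAP.single_eq_zero.1 h)

lemma homog_Xv0 : Homog (Xv K 0 : FA K) (1, 0) := by
  intro w hw
  have h3 := MAP.support_single_subset hw
  simp only [Finset.mem_singleton] at h3
  subst h3
  rfl

lemma homog_Xv1 : Homog (Xv K 1 : FA K) (1, 0) := by
  intro w hw
  have h3 := MAP.support_single_subset hw
  simp only [Finset.mem_singleton] at h3
  subst h3
  rfl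

lemma dgrow {A B d e : ℕ} (h : toLex ((1:ℕ), (0:ℕ)) < toLex (A, B)) (hd : 1 ≤ d) :
    toLex (d, e) < toLex (A * d, A * e + B) := by
  have h' := Prod.Lex.toLex_lt_toLex.1 h
  dsimp only at h'
  refine Prod.Lex.toLex_lt_toLex.2 ?_
  dsimp only
  rcases h' with h1 | ⟨h1, h2⟩
  · exact Or.inl (by nlinarith)
  · rw [← h1]
    exact Or.inr ⟨by omega, by omega⟩

lemma dpos_of {d e : ℕ} (h : toLex ((1:ℕ), (0:ℕ)) < toLex (d, e)) : 1 ≤ d := by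
  have h' := Prod.Lex.toLex_lt_toLex.1 h
  dsimp only at h'
  rcases h' with h1 | ⟨h1, h2⟩ <;> omega


variable (K)

/-- Let `φ = ρ_n τ ρ_{n−1} τ ⋯ τ ρ_1 τ ρ_0` with `τ = (y,x,z)`,
`ρ_0 = (α₀x+p₀(y,z), β₀y+r₀(z), z)` `z`-triangular, and `ρ_i = (x+p_i(y,z), y, z)`,
`p_i(0,z) = 0`, for `i = 1, …, n`.  Assume `bideg p_i > (1,0)` for `i = 1, …, n` and that
`p₀` is not of the form `γ₀y + p₀'(z)`.  Then, with `q_i` the leading bihomogeneous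
component of `p_i`, the leading bihomogeneous components of `f = φ(x)` and `g = φ(y)` are
`f̄ = q₀(q₁(…q_{n−1}(q_n(y,z),z)…,z),z)` and `ḡ = β₀·q₁(…q_{n−1}(q_n(y,z),z)…,z)`, and
`bideg f̄ > (1,0)`; in particular `φ` is not the identity automorphism. -/
theorem leading_components_of_composition
    (τ : FA K ≃ₐ[K] FA K)
    (hτx : τ (Xv K 0) = Xv K 1) (hτy : τ (Xv K 1) = Xv K 0) (hτz : τ (Xv K 2) = Xv K 2)
    (n : ℕ) (hn : 1 ≤ n) (ρ : ℕ → (FA K ≃ₐ[K] FA K))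
    (α₀ β₀ : Kˣ) (p : ℕ → FA K) (r₀ : FA K)
    (hp0mem : p 0 ∈ Algebra.adjoin K {Xv K 1, Xv K 2}) (hr0 : r₀ ∈ Algebra.adjoin K {Xv K 2})
    (hρ0x : (ρ 0) (Xv K 0) = (α₀ : K) • Xv K 0 + p 0)
    (hρ0y : (ρ 0) (Xv K 1) = (β₀ : K) • Xv K 1 + r₀)
    (hρ0z : (ρ 0) (Xv K 2) = Xv K 2)
    (hρi : ∀ i, 1 ≤ i → i ≤ n →
      p i ∈ Algebra.adjoin K {Xv K 1, Xv K 2} ∧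
      subst K ![Xv K 0, 0, Xv K 2] (p i) = 0 ∧
      (ρ i) (Xv K 0) = Xv K 0 + p i ∧ (ρ i) (Xv K 1) = Xv K 1 ∧ (ρ i) (Xv K 2) = Xv K 2)
    (hbideg : ∀ i, 1 ≤ i → i ≤ n →
      (↑(toLex ((1 : ℕ), (0 : ℕ))) : WithBot (ℕ ×ₗ ℕ)) < maxBideg K (p i))
    (hp0 : ¬ ∃ (γ : K) (r : FA K), r ∈ Algebra.adjoin K {Xv K 2} ∧ p 0 = γ • Xv K 1 + r)
    (Φ : FA K ≃ₐ[K] FA K)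
    (hΦ : Φ = (List.range n).foldl (fun acc i => ρ (i + 1) * τ * acc) (ρ 0)) :
    lead K (Φ (Xv K 0)) = nestedComp K (fun j => lead K (p (n - j))) n ∧
    lead K (Φ (Xv K 1)) = (β₀ : K) • nestedComp K (fun j => lead K (p (n - j))) (n - 1) ∧
    (↑(toLex ((1 : ℕ), (0 : ℕ))) : WithBot (ℕ ×ₗ ℕ)) < maxBideg K (Φ (Xv K 0)) ∧
    Φ ≠ 1 := by
  classical
  -- the composite automorphisms N k = (ρ k τ)(ρ (k-1) τ)⋯(ρ 1 τ)
  set N : ℕ → (FA K ≃ₐ[K] FA K) :=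
    fun k => (((List.range k).reverse).map (fun i => ρ (i + 1) * τ)).prod with hNdef
  have hN0 : N 0 = 1 := by simp [hNdef]
  have hNsucc : ∀ k, N (k + 1) = (ρ (k + 1) * τ) * N k := by
    intro k
    simp [hNdef, List.range_succ]
  have hfold : ∀ m, (List.range m).foldl (fun acc i => ρ (i + 1) * τ * acc) (ρ 0) = N m * ρ 0 := by
    intro m
    induction m with
    | zero => simp [hN0]
    | succ k ih =>
        rw [List.range_succ, List.foldl_append, ih, List.foldl_cons, List.foldl_nil, hNsucc]
        exact (mul_assoc _ _ _).symm
  rw [hfold n] at hΦ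
  set q : ℕ → FA K := fun i => lead K (p (n - i)) with hqdef
  have hNz : ∀ k, k ≤ n → N k (Xv K 2) = Xv K 2 := by
    intro k
    induction k with
    | zero => intro _; rw [hN0]; rfl
    | succ k ih =>
        intro hk
        rw [hNsucc, AlgEquiv.mul_apply, ih (by omega), AlgEquiv.mul_apply, hτz,
          (hρi (k + 1) (by omega) hk).2.2.2.2]
  have hinv2 : ∀ (e : FA K ≃ₐ[K] FA K), e (Xv K 2) = Xv K 2 → e⁻¹ (Xv K 2) = Xv K 2 := by
    intro e he
    have h1 : (e⁻¹ : FA K ≃ₐ[K] FA K) = e.symm := rfl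
    rw [h1]
    conv_lhs => rw [← he]
    exact e.symm_apply_apply _
  have hGz : ∀ j, j ≤ n + 1 → (N n * (N (j - 1))⁻¹) (Xv K 2) = Xv K 2 := by
    intro j hj
    rw [AlgEquiv.mul_apply, hinv2 _ (hNz (j - 1) (by omega)), hNz n le_rfl]
  set Yf : ℕ → FA K := fun j => (N n * (N (j - 1))⁻¹) (Xv K 1) with hYdef
  set Xf : ℕ → FA K := fun j => (N n * (N (j - 1))⁻¹) (Xv K 0) with hXdef
  have hGrec : ∀ j, 1 ≤ j → j ≤ n → (N n * (N j)⁻¹) * (ρ j * τ) = N n * (N (j - 1))⁻¹ := by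
    intro j h1 hj
    have hNj : N j = (ρ j * τ) * N (j - 1) := by
      obtain ⟨k, rfl⟩ : ∃ k, j = k + 1 := ⟨j - 1, by omega⟩
      rw [hNsucc]
      simp
    rw [hNj]
    group
  have hYb : Yf (n + 1) = Xv K 1 := by
    show (N n * (N ((n + 1) - 1))⁻¹) (Xv K 1) = _
    simp only [Nat.add_sub_cancel]
    rw [mul_inv_cancel]
    rfl
  have hXb : Xf (n + 1) = Xv K 0 := by
    show (N n * (N ((n + 1) - 1))⁻¹) (Xv K 0) = _
    simp only [Nat.add_sub_cancel]
    rw [mul_inv_cancel]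
    rfl
  have hYrec : ∀ j, 1 ≤ j → j ≤ n → Yf j = Xf (j + 1) + SY (Yf (j + 1)) (p j) := by
    intro j h1 hj
    show (N n * (N (j - 1))⁻¹) (Xv K 1) = _
    have harg : (ρ j * τ) (Xv K 1) = Xv K 0 + p j := by
      rw [AlgEquiv.mul_apply, hτy, (hρi j h1 hj).2.2.1]
    rw [← hGrec j h1 hj, AlgEquiv.mul_apply, harg, map_add]
    have hx2 : (N n * (N j)⁻¹) (Xv K 0) = Xf (j + 1) := by
      show (N n * (N j)⁻¹) (Xv K 0) = (N n * (N ((j + 1) - 1))⁻¹) (Xv K 0)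
      rw [Nat.add_sub_cancel]
    have hp2 : (N n * (N j)⁻¹) (p j) = SY (Yf (j + 1)) (p j) := by
      refine eval_yz (N n * (N j)⁻¹) ?_ ?_ (yz_supp (hρi j h1 hj).1)
      · show (N n * (N j)⁻¹) (Xv K 1) = (N n * (N ((j + 1) - 1))⁻¹) (Xv K 1)
        rw [Nat.add_sub_cancel]
      · have hgz := hGz (j + 1) (by omega)
        rwa [Nat.add_sub_cancel] at hgz
    rw [hx2, hp2]
  have hXY : ∀ j, 1 ≤ j → j ≤ n → Xf j = Yf (j + 1) := by
    intro j h1 hj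
    show (N n * (N (j - 1))⁻¹) (Xv K 0) = (N n * (N ((j + 1) - 1))⁻¹) (Xv K 1)
    rw [Nat.add_sub_cancel]
    have harg : (ρ j * τ) (Xv K 0) = Xv K 1 := by
      rw [AlgEquiv.mul_apply, hτx, (hρi j h1 hj).2.2.2.1]
    rw [← hGrec j h1 hj, AlgEquiv.mul_apply, harg]
  have hBrec : ∀ k, nestedComp K q (k + 1) = SY (nestedComp K q k) (q (k + 1)) :=
    fun k => rfl
  have hPi : ∀ i, 1 ≤ i → i ≤ n → ∃ γ : ℕ × ℕ, maxBideg K (p i) = ↑(toLex γ) ∧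
      toLex ((1 : ℕ), (0 : ℕ)) < toLex γ := by
    intro i h1 hi
    have hlt := hbideg i h1 hi
    have hne : p i ≠ 0 := by
      intro h0
      rw [h0] at hlt
      have hb : maxBideg K (0 : FA K) = ⊥ := by simp [maxBideg]
      rw [hb] at hlt
      exact not_lt_bot hlt
    obtain ⟨γ, hγ⟩ := exists_pair_of_maxBideg hne
    refine ⟨γ, hγ, ?_⟩
    rw [hγ] at hlt
    exact_mod_cast hlt
  have hy1max : maxBideg K (Xv K 1) = ↑(toLex ((1 : ℕ), (0 : ℕ))) ∧ lead K (Xv K 1) = Xv K 1 :=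
    maxBideg_lead_of_homog homog_Xv1 (Xv_ne_zero 1)
  -- main downward induction
  have main : ∀ dlt j, j + dlt = n → 1 ≤ j →
      lead K (Yf j) = nestedComp K q (n - j) ∧
      ∃ D : ℕ × ℕ, maxBideg K (Yf j) = ↑(toLex D) ∧ toLex ((1 : ℕ), (0 : ℕ)) < toLex D ∧
        maxBideg K (Yf (j + 1)) < ↑(toLex D) := by
    intro dlt
    induction dlt with
    | zero =>
        intro j hj h1
        have hjn : j = n := by omega
        subst hjn
        have hyr := hYrec j h1 le_rfl
        rw [hXb, hYb] at hyr
        obtain ⟨⟨A, B⟩, hAB, hABgt⟩ := hPi j h1 le_rfl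
        have hsub := subMain (le_refl 1) hy1max.1 hAB (yz_supp (hρi j h1 le_rfl).1)
        have harith : ((A * 1 : ℕ), (A * 0 + B : ℕ)) = (A, B) := by simp
        rw [harith] at hsub
        have hsub2 : lead K (SY (Xv K 1) (p j)) = lead K (p j) := by
          rw [hsub.2, hy1max.2, SY_id]
        have hxlt : DegLt (Xv K 0) (A, B) := by
          intro w hw
          have h3 := MAP.support_single_subset hw
          simp only [Finset.mem_singleton] at h3
          subst h3
          exact hABgt
        have hcomm : Yf j = SY (Xv K 1) (p j) + Xv K 0 := by rw [hyr, add_comm]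
        have hrec := recog2 hsub.1 hsub2 hxlt
        rw [← hcomm] at hrec
        constructor
        · rw [hrec.2]
          have h5 : j - j = 0 := by omega
          rw [h5, hqdef]
          show lead K (p j) = lead K (p (j - 0))
          rw [Nat.sub_zero]
        · refine ⟨(A, B), hrec.1, hABgt, ?_⟩
          rw [hYb, hy1max.1]
          exact_mod_cast hABgt
    | succ dlt ih =>
        intro j hj h1
        have hjlt : j < n := by omega
        obtain ⟨IH1, ⟨d, e⟩, hDmax, hDgt, hDnext⟩ := ih (j + 1) (by omega) (by omega)
        have hyr := hYrec j h1 (by omega)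
        rw [hXY (j + 1) (by omega) (by omega)] at hyr
        obtain ⟨⟨A, B⟩, hAB, hABgt⟩ := hPi j h1 (by omega)
        have hd1 : 1 ≤ d := dpos_of hDgt
        have hsub := subMain hd1 hDmax hAB (yz_supp (hρi j h1 (by omega)).1)
        have hsub2 : lead K (SY (Yf (j + 1)) (p j)) = nestedComp K q (n - j) := by
          rw [hsub.2, IH1]
          have hnj : n - j = (n - (j + 1)) + 1 := by omega
          have h6 : q ((n - (j + 1)) + 1) = lead K (p j) := by
            rw [hqdef]
            dsimp only
            rw [show n - ((n - (j + 1)) + 1) = j from by omega]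
          rw [hnj, hBrec, h6]
        have hgrow : toLex (d, e) < toLex (A * d, A * e + B) := dgrow hABgt hd1
        have hjunk : DegLt (Yf (j + 2)) (A * d, A * e + B) := by
          apply degLt_of_maxBideg_lt
          refine lt_trans hDnext ?_
          exact_mod_cast hgrow
        have hcomm : Yf j = SY (Yf (j + 1)) (p j) + Yf (j + 2) := by rw [hyr, add_comm]
        have hrec := recog2 hsub.1 hsub2 hjunk
        rw [← hcomm] at hrec
        refine ⟨hrec.2, (A * d, A * e + B), hrec.1, lt_trans hDgt hgrow, ?_⟩
        rw [hDmax]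
        exact_mod_cast hgrow
  obtain ⟨L1, ⟨d1, e1⟩, hD1max, hD1gt, hD1next⟩ := main (n - 1) 1 (by omega) le_rfl
  have hNn1 : N n * (N (1 - 1))⁻¹ = N n := by
    rw [show (1 : ℕ) - 1 = 0 from rfl, hN0]
    group
  -- Φ applied to x
  have hNy1 : N n (Xv K 1) = Yf 1 := by
    show N n (Xv K 1) = (N n * (N (1 - 1))⁻¹) (Xv K 1)
    rw [hNn1]
  have hNx1 : N n (Xv K 0) = Yf 2 := by
    have hx1 : N n (Xv K 0) = Xf 1 := by
      show N n (Xv K 0) = (N n * (N (1 - 1))⁻¹) (Xv K 0)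
      rw [hNn1]
    rw [hx1, hXY 1 le_rfl hn]
  have hΦx : Φ (Xv K 0) = (α₀ : K) • Yf 2 + SY (Yf 1) (p 0) := by
    rw [hΦ, AlgEquiv.mul_apply, hρ0x, map_add, map_smul, hNx1,
      eval_yz (N n) hNy1 (hNz n le_rfl) (yz_supp hp0mem)]
  -- analysis of p 0
  have hp0ne : p 0 ≠ 0 := by
    intro h0
    exact hp0 ⟨0, 0, Subalgebra.zero_mem _, by rw [h0]; simp⟩
  obtain ⟨⟨A0, B0⟩, hA0⟩ := exists_pair_of_maxBideg hp0ne
  have hYZ0 := yz_supp hp0mem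
  have hcount2 : ∀ w : FreeMonoid (Fin 3), (∀ c ∈ FreeMonoid.toList w, c = 1 ∨ c = 2) →
      (FreeMonoid.toList w).count 1 = 0 → ∀ c ∈ FreeMonoid.toList w, c = 2 := by
    intro w hyzw hc1 c hc
    rcases hyzw c hc with rfl | rfl
    · exact absurd hc (List.count_eq_zero.1 hc1)
    · rfl
  have hA0gt : toLex ((1 : ℕ), (0 : ℕ)) < toLex (A0, B0) := by
    rcases lt_trichotomy (toLex ((1 : ℕ), (0 : ℕ))) (toLex (A0, B0)) with h | h | h
    · exact h
    · exfalso
      have hA0' : maxBideg K (p 0) = ↑(toLex ((1 : ℕ), (0 : ℕ))) := by rw [hA0, ← h]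
      have hlead := homog_lead hA0'
      have hsupp1 : (lead K (p 0)).support ⊆ {FreeMonoid.of 1} := by
        intro w hw
        have hhom := hlead w hw
        have hyzw := hYZ0 w (supp_lead_subset _ hw)
        rw [dg_yz hyzw] at hhom
        have h2 := toLex.injective hhom
        have hc1 : (FreeMonoid.toList w).count 1 = 1 := congrArg Prod.fst h2
        have hc2 : (FreeMonoid.toList w).count 2 = 0 := congrArg Prod.snd h2
        have hall : ∀ c ∈ FreeMonoid.toList w, c = 1 := by
          intro c hc
          rcases hyzw c hc with rfl | rfl
          · rfl
          · exact absurd hc (List.count_eq_zero.1 hc2)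
        have hrep : FreeMonoid.toList w = List.replicate (FreeMonoid.toList w).length 1 :=
          List.eq_replicate_length.2 hall
        have hlen : (FreeMonoid.toList w).length = 1 := by
          have h7 := congrArg (List.count 1) hrep
          rw [List.count_replicate_self] at h7
          omega
        rw [hlen] at hrep
        have hw1 : w = FreeMonoid.of 1 := by
          apply FreeMonoid.toList.injective
          rw [hrep]
          rfl
        simp [hw1]
      set c0 := lead K (p 0) (FreeMonoid.of 1) with hc0
      have hleq := MAP.support_subset_singleton.1 hsupp1
      obtain ⟨E, hE1, hE2⟩ := lead_add_rest (K := K) (p 0)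
      have hEd := hE2 _ hA0'
      have hEsub : E = p 0 - lead K (p 0) := eq_sub_of_add_eq' hE1.symm
      have hEz : ∀ w ∈ E.support, ∀ c ∈ FreeMonoid.toList w, c = 2 := by
        intro w hw
        have hyzw : ∀ c ∈ FreeMonoid.toList w, c = 1 ∨ c = 2 := by
          rw [hEsub] at hw
          rcases Finset.mem_union.1 (MAP.support_sub hw) with h9 | h9
          · exact hYZ0 w h9
          · exact hYZ0 w (supp_lead_subset _ h9)
        have hlt' := hEd w hw
        rw [dg_yz hyzw] at hlt'
        have h9 := Prod.Lex.toLex_lt_toLex.1 hlt'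
        dsimp only at h9
        have hc1 : (FreeMonoid.toList w).count 1 = 0 := by omega
        exact hcount2 w hyzw hc1
      apply hp0
      refine ⟨c0, E, z_mem_of_supp hEz, ?_⟩
      conv_lhs => rw [hE1]
      congr 1
      rw [hleq]
      exact (smul_single_one _ _).symm
    · exfalso
      have hall : ∀ w ∈ (p 0).support, ∀ c ∈ FreeMonoid.toList w, c = 2 := by
        intro w hw
        have hyzw := hYZ0 w hw
        have hle := degLe_of_maxBideg hA0 w hw
        rw [dg_yz hyzw] at hle
        have h9 := lt_of_le_of_lt hle h
        have h10 := Prod.Lex.toLex_lt_toLex.1 h9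
        dsimp only at h10
        have hc1 : (FreeMonoid.toList w).count 1 = 0 := by omega
        exact hcount2 w hyzw hc1
      exact hp0 ⟨0, p 0, z_mem_of_supp hall, by simp⟩
  -- substitution for p 0
  have hd1' : 1 ≤ d1 := dpos_of hD1gt
  have hsub0 := subMain hd1' hD1max hA0 hYZ0
  have hgrow0 : toLex (d1, e1) < toLex (A0 * d1, A0 * e1 + B0) := dgrow hA0gt hd1'
  have hlead0 : lead K (SY (Yf 1) (p 0)) = nestedComp K q n := by
    rw [hsub0.2, L1]
    obtain ⟨m, hm⟩ : ∃ m, n = m + 1 := ⟨n - 1, by omega⟩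
    have hstep : nestedComp K q n = SY (nestedComp K q (n - 1)) (lead K (p 0)) := by
      have e2 : q (m + 1) = lead K (p 0) := by
        rw [hqdef]
        dsimp only
        rw [show n - (m + 1) = 0 from by omega]
      have e1 : m = n - 1 := by omega
      conv_lhs => rw [hm]
      rw [hBrec, e2, e1]
    rw [hstep]
  have hjunk0 : DegLt ((α₀ : K) • Yf 2) (A0 * d1, A0 * e1 + B0) := by
    apply degLt_smul
    apply degLt_of_maxBideg_lt
    refine lt_trans hD1next ?_
    exact_mod_cast hgrow0
  have hΦx' : Φ (Xv K 0) = SY (Yf 1) (p 0) + (α₀ : K) • Yf 2 := by rw [hΦx, add_comm]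
  have hrec0 := recog2 hsub0.1 hlead0 hjunk0
  rw [← hΦx'] at hrec0
  -- Φ applied to y
  have hΦy : Φ (Xv K 1) = (β₀ : K) • Yf 1 + r₀ := by
    rw [hΦ, AlgEquiv.mul_apply, hρ0y, map_add, map_smul, hNy1,
      eval_z (N n) (hNz n le_rfl) (z_supp hr0)]
  have hsm := lead_smul (β₀ : K) (Units.ne_zero β₀) hD1max
  have hr0lt : DegLt r₀ (d1, e1) := by
    intro w hw
    have hz2 := z_supp hr0 w hw
    have hc0 : (FreeMonoid.toList w).count 0 = 0 := by
      rw [List.count_eq_zero]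
      intro hmem
      exact absurd (hz2 0 hmem) (by decide)
    have hc1 : (FreeMonoid.toList w).count 1 = 0 := by
      rw [List.count_eq_zero]
      intro hmem
      exact absurd (hz2 1 hmem) (by decide)
    rw [bidegLex, hc0, hc1]
    exact Prod.Lex.toLex_lt_toLex.2 (Or.inl (by dsimp only; omega))
  have hsmlt : DegLt r₀ (d1, e1) := hr0lt
  have hrecy := recog2 hsm.1 hsm.2 hsmlt
  rw [← hΦy] at hrecy
  refine ⟨hrec0.2, ?_, ?_, ?_⟩
  · rw [hrecy.2, L1]
  · rw [hrec0.1]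
    exact_mod_cast lt_trans hD1gt hgrow0
  · intro hid
    have h1 : Φ (Xv K 0) = Xv K 0 := by rw [hid]; rfl
    have h2 := hrec0.1
    rw [h1, (maxBideg_lead_of_homog homog_Xv0 (Xv_ne_zero 0)).1] at h2
    have h3 : toLex ((1 : ℕ), (0 : ℕ)) = toLex (A0 * d1, A0 * e1 + B0) := by exact_mod_cast h2
    rw [h3] at hD1gt
    exact lt_irrefl _ (lt_trans hD1gt hgrow0)
end

section
/- Let K be a field, β ∈ K∖{0}, and, in the notation of the K[t₀,…,t_n]-module structure on H_n, let v(x,y,z) = Σ_i θ_i(t₀,t₁,…,t_k) ∗ u_{i₁}⋯u_{i_k} ∈ H_k and q(y,z) = ω(t₀,t₁,…,t_d) ∗ y^d ∈ H_d, where θ_i ∈ K[t₀,…,t_k], ω ∈ K[t₀,…,t_d], and each u_{i_j} ∈ {x,y}. Then the substitution u(x,y,z) = q(v(x,y,z)/β, z) ∈ H_{kd} equals ω(t₀,t_d,t_{2d},…,t_{kd})/β^d acting on the product (Σ_i θ_i(t₀,t₁,…,t_k) ∗ u_{i₁}⋯u_{i_k}) (Σ_i θ_i(t_k,t_{k+1},…,t_{2k})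 ∗ u_{i₁}⋯u_{i_k}) ⋯ (Σ_i θ_i(t_{k(d−1)},t_{k(d−1)+1},…,t_{kd}) ∗ u_{i₁}⋯u_{i_k}). -/
open MonoidAlgebra

noncomputable section

variable (K : Type) [Field K]

/-- `insertZ b j w` inserts `b i` extra letters `z` into the `i`-th gap of the word `w`
(gaps numbered from `j`): `z^{a₀}u₁z^{a₁}⋯u_mz^{a_m} ↦ z^{a₀+b₀}u₁z^{a₁+b₁}⋯u_mz^{a_m+b_m}`. -/
def insertZ (b : ℕ → ℕ) : ℕ → List (Fin 3) → List (Fin 3)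
  | j, [] => List.replicate (b j) (2 : Fin 3)
  | j, a :: rest =>
    if a = (2 : Fin 3) then a :: insertZ b j rest
    else List.replicate (b j) (2 : Fin 3) ++ a :: insertZ b (j + 1) rest

/-- The `∗`-action of `K[t₀,…,t_m]` on the subspace `H_m ⊆ K⟨x,y,z⟩` of polynomials
homogeneous of degree `m` in `x,y`:
`t₀^{b₀}⋯t_m^{b_m} ∗ z^{a₀}u₁z^{a₁}⋯u_mz^{a_m} = z^{a₀+b₀}u₁z^{a₁+b₁}⋯u_mz^{a_m+b_m}`,
extended bilinearly. -/
def act {m : ℕ} (θ : MvPolynomial (Fin (m + 1)) K) (f : FA K) : FA K :=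
  Finsupp.sum (AddMonoidAlgebra.coeff θ) fun b c =>
    Finsupp.sum f.coeff fun w cw =>
      MonoidAlgebra.single
        (FreeMonoid.ofList
          (insertZ (fun j => if hj : j < m + 1 then b ⟨j, hj⟩ else 0) 0 (FreeMonoid.toList w)))
        (c * cw)

/-!
Both sides are linear in `ω`, so let `ω = c t^b`. Substituting `v/β` for `y` in
`z^{b₀} y z^{b₁} ⋯ y z^{b_d}` gives `β^{-d} z^{b₀} v z^{b₁} ⋯ v z^{b_d}`. As `v` is homogeneous of
degree `k` in `x, y`, the gaps `0, k, 2k, …, dk` of a word of `v^d` are exactly the junctions of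
its `d` factors, so the renamed monomial `t₀^{b₀} t_k^{b₁} ⋯ t_{dk}^{b_d}` inserts the same powers
of `z` in the same places. For `k = 0` all these gaps coincide; then `v` is a polynomial in `z`
alone and commutes with `z`, which again gives the identity.
-/

def degXY (w : List (Fin 3)) : ℕ := w.countP (· ≠ 2)

@[simp] lemma degXY_nil : degXY [] = 0 := rfl

@[simp] lemma degXY_cons (a : Fin 3) (w : List (Fin 3)) :
    degXY (a :: w) = degXY w + if a = 2 then 0 else 1 := by
  by_cases ha : a = 2 <;> simp [degXY, ha]

@[simp] lemma degXY_append (w₁ w₂ : List (Fin 3)) : degXY (w₁ ++ w₂) = degXY w₁ + degXY w₂ :=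
  List.countP_append ..

@[simp] lemma degXY_replicate_two (n : ℕ) : degXY (List.replicate n 2) = 0 := by
  simp [degXY, List.countP_eq_zero]

@[simp] lemma degXY_insertZ (b : ℕ → ℕ) (j : ℕ) (w : List (Fin 3)) :
    degXY (insertZ b j w) = degXY w := by
  induction w generalizing j with
  | nil => simp [insertZ]
  | cons a w ih => by_cases ha : a = 2 <;> simp [insertZ, ha, ih]

lemma degXY_ofFn_castSucc {k : ℕ} (u : Fin k → Fin 2) :
    degXY (List.ofFn fun t => (u t).castSucc) = k := by
  rw [degXY, List.countP_eq_length.mpr, List.length_ofFn]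
  intro a ha
  obtain ⟨t, rfl⟩ := List.mem_ofFn.mp ha
  simpa using (Fin.castSucc_lt_last (u t)).ne

-- The gap `j + degXY w₁` is both the last gap of `w₁` and the first of `w₂`; it is charged to `w₂`.
lemma insertZ_append (b : ℕ → ℕ) (j : ℕ) (w₁ w₂ : List (Fin 3)) :
    insertZ b j (w₁ ++ w₂) =
      insertZ (fun i => if i < j + degXY w₁ then b i else 0) j w₁ ++
        insertZ b (j + degXY w₁) w₂ := by
  induction w₁ generalizing j with
  | nil => simp [insertZ]
  | cons a w ih =>
    by_cases ha : a = 2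
    · simp [insertZ, ha, ih]
    · simp only [List.cons_append, insertZ, ha, if_false, ih, degXY_cons, List.append_assoc]
      rw [if_pos (by omega), show j + 1 + degXY w = j + (degXY w + 1) by omega]

lemma insertZ_eq_replicate_append {b : ℕ → ℕ} {j : ℕ} {w : List (Fin 3)}
    (hb : ∀ i, j < i → i ≤ j + degXY w → b i = 0) :
    insertZ b j w = List.replicate (b j) 2 ++ w := by
  induction w generalizing j with
  | nil => simp [insertZ]
  | cons a w ih =>
    by_cases ha : a = 2
    · subst ha
      simp only [insertZ, if_true, degXY_cons] at hb ⊢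
      rw [ih (fun i h₁ h₂ => hb i h₁ (by omega)), ← List.cons_append, ← List.replicate_succ,
        List.replicate_succ', List.append_assoc, List.singleton_append]
    · simp only [insertZ, ha, if_false, degXY_cons] at hb ⊢
      rw [ih (fun i h₁ h₂ => hb i (by omega) (by omega)), hb (j + 1) (by omega) (by omega)]
      rfl

variable {K}

lemma single_ofList_mul_single_ofList (l₁ l₂ : List (Fin 3)) (c₁ c₂ : K) :
    single (FreeMonoid.ofList l₁) c₁ * single (FreeMonoid.ofList l₂) c₂ =
      (single (FreeMonoid.ofList (l₁ ++ l₂)) (c₁ * c₂) : FA K) := by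
  rw [single_mul_single, FreeMonoid.ofList_append]

lemma Xv_two_pow_mul_single (n : ℕ) (l : List (Fin 3)) (c : K) :
    Xv K 2 ^ n * single (FreeMonoid.ofList l) c =
      single (FreeMonoid.ofList (List.replicate n 2 ++ l)) c := by
  induction n with
  | zero => simp
  | succ n ih =>
    rw [pow_succ', mul_assoc, ih, Xv, of_apply, ← FreeMonoid.ofList_singleton,
      single_ofList_mul_single_ofList, one_mul, List.replicate_succ]
    rfl

lemma Xv_two_pow (n : ℕ) : Xv K 2 ^ n = single (FreeMonoid.ofList (List.replicate n 2)) 1 := by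
  simpa [← one_def] using Xv_two_pow_mul_single (K := K) n [] 1

variable (K) in
def insertZMap (b : ℕ → ℕ) (j : ℕ) : FA K →ₗ[K] FA K :=
  mapDomainLinearMap K K fun w => FreeMonoid.ofList (insertZ b j w.toList)

lemma insertZMap_single (b : ℕ → ℕ) (j : ℕ) (l : List (Fin 3)) (c : K) :
    insertZMap K b j (single (FreeMonoid.ofList l) c) =
      single (FreeMonoid.ofList (insertZ b j l)) c :=
  mapDomainLinearMap_single ..

-- The number of `z`s that `t^b ∗` inserts into the `j`-th gap.
def gapExp {m : ℕ} (b : Fin (m + 1) →₀ ℕ) (j : ℕ) : ℕ :=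
  if hj : j < m + 1 then b ⟨j, hj⟩ else 0

lemma act_eq_sum {m : ℕ} (θ : MvPolynomial (Fin (m + 1)) K) (f : FA K) :
    act K θ f = (AddMonoidAlgebra.coeff θ).sum fun b c => c • insertZMap K (gapExp b) 0 f := by
  refine Finsupp.sum_congr fun b _ => coeff_injective ?_
  rw [coeff_finsuppSum, coeff_smul, insertZMap, coeff_mapDomainLinearMap, Finsupp.mapDomain,
    Finsupp.smul_sum]
  refine Finsupp.sum_congr fun w _ => ?_
  rw [coeff_single, Finsupp.smul_single, smul_eq_mul]
  rfl

lemma act_monomial {m : ℕ} (b : Fin (m + 1) →₀ ℕ) (c : K) (f : FA K) :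
    act K (MvPolynomial.monomial b c) f = c • insertZMap K (gapExp b) 0 f := by
  rw [act_eq_sum, ← MvPolynomial.single_eq_monomial, AddMonoidAlgebra.coeff_single,
    Finsupp.sum_single_index (zero_smul K (insertZMap K (gapExp b) 0 f))]

lemma act_add {m : ℕ} (θ η : MvPolynomial (Fin (m + 1)) K) (f : FA K) :
    act K (θ + η) f = act K θ f + act K η f := by
  simp only [act_eq_sum, AddMonoidAlgebra.coeff_add]
  exact Finsupp.sum_add_index' (fun _ => zero_smul ..) fun _ _ _ => add_smul ..

variable (K) in
def homogXY (n : ℕ) : Submodule K (FA K) :=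
  Submodule.span K (of K _ '' {w | degXY w.toList = n})

lemma single_mem_homogXY {n : ℕ} {l : List (Fin 3)} (hl : degXY l = n) (c : K) :
    single (FreeMonoid.ofList l) c ∈ homogXY K n := by
  rw [← mul_one c, ← smul_eq_mul, ← smul_single, ← of_apply]
  exact Submodule.smul_mem _ _ (Submodule.subset_span ⟨_, hl, rfl⟩)

lemma one_mem_homogXY_zero : (1 : FA K) ∈ homogXY K 0 :=
  single_mem_homogXY (l := []) rfl 1

lemma mul_mem_homogXY {m n : ℕ} {f g : FA K} (hf : f ∈ homogXY K m) (hg : g ∈ homogXY K n) :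
    f * g ∈ homogXY K (m + n) := by
  have hmul : homogXY K m * homogXY K n ≤ homogXY K (m + n) := by
    rw [homogXY, homogXY, Submodule.span_mul_span, Submodule.span_le]
    rintro _ ⟨_, ⟨u, hu, rfl⟩, _, ⟨w, hw, rfl⟩, rfl⟩
    exact Submodule.subset_span ⟨u * w, by simp_all [FreeMonoid.toList_mul], map_mul ..⟩
  exact hmul (Submodule.mul_mem_mul hf hg)

lemma pow_mem_homogXY {n : ℕ} {f : FA K} (hf : f ∈ homogXY K n) (d : ℕ) :
    f ^ d ∈ homogXY K (n * d) := by
  induction d with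
  | zero => simpa using one_mem_homogXY_zero
  | succ d ih => simpa [pow_succ, Nat.mul_succ] using mul_mem_homogXY ih hf

lemma insertZMap_mem_homogXY (b : ℕ → ℕ) (j : ℕ) {n : ℕ} {f : FA K} (hf : f ∈ homogXY K n) :
    insertZMap K b j f ∈ homogXY K n := by
  rw [homogXY, ← Submodule.mem_comap]
  refine Submodule.span_le.mpr ?_ hf
  rintro _ ⟨w, hw, rfl⟩
  rw [SetLike.mem_coe, Submodule.mem_comap, of_apply, ← FreeMonoid.ofList_toList w,
    insertZMap_single]
  exact single_mem_homogXY (by simpa using hw) 1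

lemma act_mem_homogXY {m n : ℕ} (θ : MvPolynomial (Fin (m + 1)) K) {f : FA K}
    (hf : f ∈ homogXY K n) : act K θ f ∈ homogXY K n := by
  rw [act_eq_sum]
  exact Submodule.finsuppSum_mem _ _ _ _ fun b _ =>
    Submodule.smul_mem _ _ (insertZMap_mem_homogXY _ _ hf)

lemma insertZMap_mul (b : ℕ → ℕ) (j : ℕ) {n : ℕ} {f : FA K} (hf : f ∈ homogXY K n) (g : FA K) :
    insertZMap K b j (f * g) =
      insertZMap K (fun i => if i < j + n then b i else 0) j f * insertZMap K b (j + n) g := by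
  induction hf using Submodule.span_induction with
  | mem _ hx =>
    obtain ⟨w, hw : degXY w.toList = n, rfl⟩ := hx
    induction g using MonoidAlgebra.induction_linear with
    | zero => simp
    | add g₁ g₂ h₁ h₂ => simp only [mul_add, map_add, h₁, h₂]
    | single u c =>
      rw [of_apply, ← FreeMonoid.ofList_toList w, ← FreeMonoid.ofList_toList u,
        single_ofList_mul_single_ofList, insertZMap_single, insertZMap_single, insertZMap_single,
        single_ofList_mul_single_ofList, insertZ_append, hw]
  | zero => simp
  | add f₁ f₂ _ _ h₁ h₂ => simp only [add_mul, map_add, h₁, h₂]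
  | smul a f _ h => simp only [smul_mul_assoc, map_smul, h]

lemma insertZMap_eq_Xv_two_pow_mul {b : ℕ → ℕ} {j n : ℕ} (hb : ∀ i, j < i → i ≤ j + n → b i = 0)
    {f : FA K} (hf : f ∈ homogXY K n) : insertZMap K b j f = Xv K 2 ^ b j * f := by
  induction hf using Submodule.span_induction with
  | mem _ hx =>
    obtain ⟨w, hw : degXY w.toList = n, rfl⟩ := hx
    rw [of_apply, ← FreeMonoid.ofList_toList w, insertZMap_single, Xv_two_pow_mul_single,
      insertZ_eq_replicate_append (by rwa [hw])]
  | zero => simp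
  | add f₁ f₂ _ _ h₁ h₂ => simp only [mul_add, map_add, h₁, h₂]
  | smul a f _ h => simp only [mul_smul_comm, map_smul, h]

lemma commute_Xv_two_of_mem_homogXY_zero {f : FA K} (hf : f ∈ homogXY K 0) :
    Commute (Xv K 2) f := by
  induction hf using Submodule.span_induction with
  | mem _ hx =>
    obtain ⟨w, hw : degXY w.toList = 0, rfl⟩ := hx
    have hz : w.toList = List.replicate w.toList.length 2 :=
      List.eq_replicate_iff.mpr ⟨rfl, fun a ha => by simpa using List.countP_eq_zero.mp hw a ha⟩
    rw [of_apply, ← FreeMonoid.ofList_toList w, hz, ← Xv_two_pow]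
    exact (Commute.refl _).pow_right _
  | zero => exact Commute.zero_right _
  | add f₁ f₂ _ _ h₁ h₂ => exact h₁.add_right h₂
  | smul a f _ h => exact h.smul_right a

-- `gapProd v c d = z^{c 0} v z^{c 1} ⋯ v z^{c d}`.
def gapProd (v : FA K) : (ℕ → ℕ) → ℕ → FA K
  | c, 0 => Xv K 2 ^ c 0
  | c, d + 1 => Xv K 2 ^ c 0 * v * gapProd v (fun i => c (i + 1)) d

lemma gapProd_smul (a : K) (v : FA K) (c : ℕ → ℕ) (d : ℕ) :
    gapProd (a • v) c d = a ^ d • gapProd v c d := by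
  induction d generalizing c with
  | zero => simp [gapProd]
  | succ d ih => simp only [gapProd, ih, mul_smul_comm, smul_mul_assoc, smul_smul, pow_succ]

lemma gapProd_of_mem_homogXY_zero {v : FA K} (hv : v ∈ homogXY K 0) (c : ℕ → ℕ) (d : ℕ) :
    gapProd v c d = Xv K 2 ^ (∑ i ∈ Finset.range (d + 1), c i) * v ^ d := by
  induction d generalizing c with
  | zero => simp [gapProd]
  | succ d ih =>
    rw [gapProd, ih, Finset.sum_range_succ' c (d + 1), add_comm _ (c 0), pow_add, pow_succ']
    simp only [mul_assoc]
    rw [← mul_assoc v, ← ((commute_Xv_two_of_mem_homogXY_zero hv).pow_left _).eq, mul_assoc]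

lemma insertZMap_pow {b : ℕ → ℕ} {k : ℕ} (hk : 0 < k) {v : FA K} (hv : v ∈ homogXY K k)
    (d j : ℕ) (hb : ∀ m < d, ∀ i, 0 < i → i < k → b (j + m * k + i) = 0) :
    insertZMap K b j (v ^ d) = gapProd v (fun m => b (j + m * k)) d := by
  induction d generalizing j with
  | zero =>
    simpa [gapProd] using insertZMap_eq_Xv_two_pow_mul (b := b) (j := j)
      (fun i h₁ h₂ => by omega) one_mem_homogXY_zero
  | succ d ih =>
    have hfirst : insertZMap K (fun i => if i < j + k then b i else 0) j v = Xv K 2 ^ b j * v := by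
      refine (insertZMap_eq_Xv_two_pow_mul (fun i h₁ h₂ => ?_) hv).trans (by simp [hk])
      split_ifs with h
      · simpa [show j + (i - j) = i by omega] using hb 0 (by omega) (i - j) (by omega) (by omega)
      · rfl
    have hrest := ih (j + k) fun m hm i h₁ h₂ => by
      simpa [add_mul, add_assoc, add_comm k] using hb (m + 1) (by omega) i h₁ h₂
    rw [pow_succ', insertZMap_mul b j hv, hfirst, hrest, gapProd]
    simp only [zero_mul, add_zero, add_mul, one_mul, add_assoc, add_comm k]

lemma gapExp_val {m : ℕ} (b : Fin (m + 1) →₀ ℕ) (j : Fin (m + 1)) : gapExp b j = b j :=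
  dif_pos j.isLt

section mapDomain

variable {d n k : ℕ} {g : Fin (d + 1) → Fin (n + 1)} (b : Fin (d + 1) →₀ ℕ)

lemma gapExp_mapDomain_of_forall_ne {i : ℕ} (hi : ∀ j, (g j : ℕ) ≠ i) :
    gapExp (Finsupp.mapDomain g b) i = 0 := by
  unfold gapExp
  split_ifs with h
  · exact Finsupp.mapDomain_of_notMem_range _ _ fun ⟨j, hj⟩ => hi j (by rw [hj])
  · rfl

lemma gapExp_mapDomain_mul (hk : 0 < k) (hg : ∀ j, (g j : ℕ) = j * k) (m : ℕ) :
    gapExp (Finsupp.mapDomain g b) (m * k) = gapExp b m := by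
  by_cases hm : m < d + 1
  · have hinj : Function.Injective g := fun j j' h => by
      have := congrArg Fin.val h
      rwa [hg, hg, Nat.mul_left_inj hk.ne', Fin.val_inj] at this
    rw [show m * k = g ⟨m, hm⟩ from (hg ⟨m, hm⟩).symm, gapExp_val, Finsupp.mapDomain_apply hinj]
    exact (gapExp_val b ⟨m, hm⟩).symm
  · rw [gapExp_mapDomain_of_forall_ne b fun j h => ?_, gapExp, dif_neg hm]
    rw [hg, Nat.mul_left_inj hk.ne'] at h
    omega

lemma gapExp_mapDomain_of_not_dvd (hg : ∀ j, (g j : ℕ) = j * k) {i : ℕ} (hi : ¬ k ∣ i) :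
    gapExp (Finsupp.mapDomain g b) i = 0 :=
  gapExp_mapDomain_of_forall_ne b fun j h => hi ⟨j, by rw [← h, hg, mul_comm]⟩

lemma gapExp_mapDomain_zero (hg : ∀ j, (g j : ℕ) = 0) :
    gapExp (Finsupp.mapDomain g b) 0 = ∑ i ∈ Finset.range (d + 1), gapExp b i := by
  rw [← Fin.sum_univ_eq_sum_range, show 0 = ((0 : Fin (n + 1)) : ℕ) from rfl, gapExp_val,
    Finsupp.mapDomain, Finsupp.sum_apply, Finsupp.sum_fintype _ _ (by simp)]
  refine Finset.sum_congr rfl fun j _ => ?_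
  rw [show g j = 0 from Fin.ext (hg j), Finsupp.single_eq_same, gapExp_val]

end mapDomain

lemma insertZMap_gapExp_mapDomain_pow {k d n : ℕ} {g : Fin (d + 1) → Fin (n + 1)}
    (hg : ∀ j, (g j : ℕ) = j * k) (b : Fin (d + 1) →₀ ℕ) {v : FA K} (hv : v ∈ homogXY K k) :
    insertZMap K (gapExp (Finsupp.mapDomain g b)) 0 (v ^ d) = gapProd v (gapExp b) d := by
  rcases Nat.eq_zero_or_pos k with rfl | hk
  · have hvd : v ^ d ∈ homogXY K 0 := by simpa using pow_mem_homogXY hv d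
    rw [insertZMap_eq_Xv_two_pow_mul (fun i h₁ h₂ => by omega) hvd,
      gapProd_of_mem_homogXY_zero hv, gapExp_mapDomain_zero b (by simpa using hg)]
  · rw [insertZMap_pow hk hv d 0 fun m _ i h₁ h₂ => gapExp_mapDomain_of_not_dvd b hg ?_]
    · simp only [zero_add, gapExp_mapDomain_mul b hk hg]
    · rw [zero_add, Nat.dvd_add_right (dvd_mul_left k m)]
      exact Nat.not_dvd_of_pos_of_lt h₁ h₂

lemma prod_map_insertZ_replicate_one (f : Fin 3 → FA K) (hf : f 2 = Xv K 2) (c : ℕ → ℕ)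
    (j d : ℕ) :
    ((insertZ c j (List.replicate d 1)).map f).prod = gapProd (f 1) (fun i => c (j + i)) d := by
  induction d generalizing j with
  | zero => simp [insertZ, gapProd, hf]
  | succ d ih =>
    simp only [List.replicate_succ, insertZ, Fin.reduceEq, if_false, List.map_append,
      List.prod_append, List.map_replicate, List.prod_replicate, hf, List.map_cons, List.prod_cons,
      ih, gapProd, add_zero, mul_assoc]
    simp only [add_assoc, add_comm 1]

lemma subst_single_ofList (f : Fin 3 → FA K) (l : List (Fin 3)) (c : K) :
    subst K f (single (FreeMonoid.ofList l) c) = c • (l.map f).prod := by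
  rw [subst, lift_single, FreeMonoid.lift_ofList]

/-- Formanek's trick (Lemma 2.2): let `β ∈ K∖{0}`,
`v = Σ_i θ_i(t₀,…,t_k) ∗ u_{i₁}⋯u_{i_k} ∈ H_k` and `q = ω(t₀,…,t_d) ∗ y^d ∈ H_d`.  Then
`u = q(v/β, z)` equals `ω(t₀,t_k,t_{2k},…,t_{kd})/β^d` acting on the product of the `d`
copies `Σ_i θ_i(t_{jk},…,t_{(j+1)k}) ∗ u_{i₁}⋯u_{i_k}` (`j = 0,…,d−1`) of `v`. -/
theorem formanek_substitution (β : K) (k d : ℕ)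
    (ι : Type) [Fintype ι] (θ : ι → MvPolynomial (Fin (k + 1)) K)
    (U : ι → Fin k → Fin 2) (ω : MvPolynomial (Fin (d + 1)) K)
    (v q : FA K)
    (hv : v = ∑ i, act K (θ i)
      (MonoidAlgebra.single (FreeMonoid.ofList (List.ofFn fun t => Fin.castSucc (U i t))) 1))
    (hq : q = act K ω
      (MonoidAlgebra.single (FreeMonoid.ofList (List.replicate d (1 : Fin 3))) 1)) :
    subst K ![Xv K 0, β⁻¹ • v, Xv K 2] q =
      (β ^ d)⁻¹ • act K
        (MvPolynomial.rename
          (fun j : Fin (d + 1) =>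
            (⟨(j : ℕ) * k, Nat.lt_succ_of_le (by
              calc (j : ℕ) * k ≤ d * k := Nat.mul_le_mul_right k (Fin.is_le j)
                _ = k * d := Nat.mul_comm d k)⟩ : Fin (k * d + 1))) ω)
        (v ^ d) := by
  have hvk : v ∈ homogXY K k := hv ▸ Submodule.sum_mem _ fun i _ =>
    act_mem_homogXY _ (single_mem_homogXY (degXY_ofFn_castSucc (U i)) 1)
  subst hq
  induction ω using MvPolynomial.induction_on' with
  | monomial b c =>
    rw [act_monomial, map_smul, insertZMap_single, subst_single_ofList,
      prod_map_insertZ_replicate_one ![Xv K 0, β⁻¹ • v, Xv K 2] rfl, MvPolynomial.rename_monomial,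
      act_monomial,
      insertZMap_gapExp_mapDomain_pow (fun _ => rfl) b hvk]
    simp only [Matrix.cons_val, zero_add, gapProd_smul, one_smul, inv_pow, smul_comm c]
  | add p p' hp hp' => rw [act_add, map_add, hp, hp', map_add, act_add, smul_add]
end
end

section
/- Let K be a field and let θ be an automorphism of K⟨x,y,z⟩ which fixes both x and z. Then θ(y) = βy + r(x,z) for some β ∈ K∖{0} and some polynomial r(x,z) ∈ K⟨x,z⟩ not involving y. Consequently, if (f,g) and (f,g′) are two z-automorphisms of K⟨x,y,z⟩ with the same first coordinate f, then (f,g′) = (f,g) ∘ (x, βy + r(x,z)) for some β ∈ K∖{0} and r ∈ K⟨x,z⟩. -/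
open MonoidAlgebra

noncomputable section

variable (K : Type) [Field K]

/-!
Put `p = θ y` and `q = θ⁻¹ y`. As `θ⁻¹` fixes the other generators, it is the substitution
`y ↦ q`, so substituting `q` for `y` in `p` gives `y` back. Order words by their number of `y`s,
then by length, then lexicographically: a total order compatible with multiplication. The leading
word `w` of `q` contains `y` (since `p(q) = y` does), so substituting `w` for `y` is injective on
words. Hence the word `m` of `p` for which `m[y := w]` is largest contributes the nonzero
coefficient `p_m q_w ^ deg_y m` to `p(q)` at `m[y := w]`, which must therefore be `y`. This forces
`m = w = y`, and the maximality of `m` says that every other word of `p` is free of `y`.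
-/

/-- A monomial order on `M`, given by an embedding into a linear order. -/
structure IsMulKey {M Λ : Type*} [Mul M] [LinearOrder Λ] (κ : M → Λ) : Prop where
  injective : Function.Injective κ
  mul_lt_mul_right : ∀ {a b : M} (c : M), κ a < κ b → κ (a * c) < κ (b * c)
  mul_lt_mul_left : ∀ (a : M) {b c : M}, κ b < κ c → κ (a * b) < κ (a * c)

namespace IsMulKey

variable {M Λ : Type*} [Mul M] [LinearOrder Λ] {κ : M → Λ}

lemma mul_le_mul (hκ : IsMulKey κ) {a b c d : M} (hab : κ a ≤ κ b) (hcd : κ c ≤ κ d) :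
    κ (a * c) ≤ κ (b * d) := by
  calc κ (a * c) ≤ κ (b * c) := by
        rcases hab.lt_or_eq with h | h
        · exact (hκ.mul_lt_mul_right c h).le
        · rw [hκ.injective h]
    _ ≤ κ (b * d) := by
        rcases hcd.lt_or_eq with h | h
        · exact (hκ.mul_lt_mul_left b h).le
        · rw [hκ.injective h]

lemma uniqueMul (hκ : IsMulKey κ) {s t : Finset M} {a b : M} (hs : ∀ x ∈ s, κ x ≤ κ a)
    (ht : ∀ y ∈ t, κ y ≤ κ b) : UniqueMul s t a b := by
  intro x y hx hy hxy
  have hxa : x = a := by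
    refine hκ.injective ((hs x hx).eq_of_not_lt fun hlt => ?_)
    have := (hκ.mul_lt_mul_right y hlt).trans_le (hκ.mul_le_mul le_rfl (ht y hy))
    exact this.ne (congrArg κ hxy)
  subst hxa
  refine ⟨rfl, hκ.injective ((ht y hy).eq_of_not_lt fun hlt => ?_)⟩
  exact (hκ.mul_lt_mul_left x hlt).ne (congrArg κ hxy)

end IsMulKey

namespace FreeMonoid

lemma eq_of_of_mem_of_length_le_one {α : Type*} {a : α} {u : FreeMonoid α} (ha : a ∈ u.toList)
    (hu : u.length ≤ 1) : u = of a := by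
  cases u with
  | one => simp at ha
  | of_mul x xs =>
    rw [length_mul, length_of, add_le_iff_nonpos_right, Nat.le_zero, length_eq_zero] at hu
    subst hu
    simp_all

section Substitution

variable {α : Type*} [DecidableEq α] (a : α)

def substLetter (w : FreeMonoid α) : FreeMonoid α →* FreeMonoid α :=
  lift fun i => if i = a then w else of i

variable {a} {w : FreeMonoid α}

@[simp]
lemma substLetter_of_self : substLetter a w (of a) = w := by simp [substLetter]

@[simp]
lemma substLetter_of_of_ne {i : α} (hi : i ≠ a) : substLetter a w (of i) = of i := by
  simp [substLetter, hi]

lemma count_substLetter (u : FreeMonoid α) :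
    (substLetter a w u).toList.count a = u.toList.count a * w.toList.count a := by
  induction u with
  | one => simp
  | of i => by_cases hi : i = a <;> simp [hi]
  | mul u v hu hv => simp [toList_mul, hu, hv, add_mul]

lemma length_le_length_substLetter (hw : w ≠ 1) (u : FreeMonoid α) :
    u.length ≤ (substLetter a w u).length := by
  induction u with
  | one => simp
  | of i =>
    by_cases hi : i = a
    · simpa [hi, length_of, Nat.one_le_iff_ne_zero, length_eq_zero] using hw
    · simp [hi]
  | mul u v hu hv => simpa [length_mul] using Nat.add_le_add hu hv

lemma substLetter_eq_of_self_iff {u : FreeMonoid α} :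
    substLetter a w u = of a ↔ u = of a ∧ w = of a := by
  refine ⟨fun h => ?_, fun ⟨hu, hw⟩ => by rw [hu, hw, substLetter_of_self]⟩
  have hcount := congrArg (fun v => v.toList.count a) h
  simp only [count_substLetter, toList_of, List.count_singleton_self] at hcount
  have hu : u = of a := by
    refine eq_of_of_mem_of_length_le_one (List.count_pos_iff.mp ?_) ?_
    · rw [Nat.eq_one_of_mul_eq_one_right hcount]
      exact one_pos
    · have hw : w ≠ 1 := by rintro rfl; simp at hcount
      simpa [h] using length_le_length_substLetter (a := a) hw u
  subst hu
  exact ⟨rfl, by simpa using h⟩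

lemma substLetter_self : substLetter a (of a) = MonoidHom.id (FreeMonoid α) :=
  hom_eq fun i => by by_cases hi : i = a <;> simp [hi]

lemma idxOf_substLetter (hw : a ∈ w.toList) {u : FreeMonoid α} (hu : a ∈ u.toList) :
    (substLetter a w u).toList.idxOf a = u.toList.idxOf a + w.toList.idxOf a := by
  induction u using FreeMonoid.inductionOn' with
  | one => simp at hu
  | of_mul i t ih =>
    by_cases hi : i = a
    · subst hi
      simp [toList_mul, List.idxOf_append_of_mem hw]
    · have ht : a ∈ t.toList := by simpa [toList_of_mul, Ne.symm hi] using hu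
      simp [hi, toList_mul, List.idxOf_cons_ne _ hi, ih ht]
      omega

lemma eq_one_of_substLetter_eq_one (hw : w ≠ 1) {u : FreeMonoid α}
    (hu : substLetter a w u = 1) : u = 1 := by
  simpa [hu] using length_le_length_substLetter (a := a) hw u

-- The first `a` of the left image is the first `a` of `w`; in the right image it comes later.
lemma substLetter_of_self_mul_ne (hw : a ∈ w.toList) {j : α} (hj : j ≠ a)
    (t t' : FreeMonoid α) :
    substLetter a w (of a * t) ≠ substLetter a w (of j * t') := by
  intro h
  have hmem : a ∈ (of j * t').toList := by
    have hpos : 0 < (substLetter a w (of j * t')).toList.count a := by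
      rw [← h, count_substLetter]
      exact Nat.mul_pos (by simp) (List.count_pos_iff.mpr hw)
    rw [count_substLetter] at hpos
    exact List.count_pos_iff.mp (Nat.pos_of_mul_pos_right hpos)
  have hidx : (substLetter a w (of a * t)).toList.idxOf a =
      (substLetter a w (of j * t')).toList.idxOf a := by rw [h]
  rw [idxOf_substLetter hw hmem, idxOf_substLetter hw (by simp), toList_of_mul,
    toList_of_mul, List.idxOf_cons_self, List.idxOf_cons_ne _ hj] at hidx
  omega

lemma substLetter_injective (hw : a ∈ w.toList) : Function.Injective (substLetter a w) := by
  have hw1 : w ≠ 1 := by rintro rfl; simp at hw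
  intro u
  induction u using FreeMonoid.inductionOn' with
  | one =>
    intro u' h
    rw [map_one] at h
    exact (eq_one_of_substLetter_eq_one hw1 h.symm).symm
  | of_mul i t ih =>
    intro u' h
    cases u' with
    | one => exact eq_one_of_substLetter_eq_one hw1 (h.trans (map_one _))
    | of_mul j t' =>
      by_cases hi : i = a <;> by_cases hj : j = a
      · subst hi hj
        rw [ih (mul_left_cancel (by simpa only [map_mul, substLetter_of_self] using h))]
      · exact absurd h (hi ▸ substLetter_of_self_mul_ne hw hj t t')
      · exact absurd h.symm (hj ▸ substLetter_of_self_mul_ne hw hi t' t)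
      · simp only [map_mul, substLetter_of_of_ne hi, substLetter_of_of_ne hj] at h
        rw [← toList.injective.eq_iff, toList_of_mul, toList_of_mul, List.cons_eq_cons] at h
        obtain ⟨rfl, h⟩ := h
        rw [ih (toList.injective h)]

end Substitution

section Key

variable {n : ℕ}

-- Nonzero digits `i + 1` keep words of different lengths apart; base `n + 2` also covers `n = 0`.
def digitValue (u : FreeMonoid (Fin n)) : ℕ :=
  Nat.ofDigits (n + 2) (u.toList.map fun i => i.val + 1)

lemma digitValue_mul (u v : FreeMonoid (Fin n)) :
    digitValue (u * v) = digitValue u + (n + 2) ^ u.length * digitValue v := by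
  simp [digitValue, toList_mul, Nat.ofDigits_append, length]

lemma digitValue_injective : Function.Injective (digitValue (n := n)) := by
  have hdigits (u : FreeMonoid (Fin n)) :
      Nat.digits (n + 2) (digitValue u) = u.toList.map fun i => i.val + 1 :=
    Nat.digits_ofDigits _ (by omega) _ (by simp) (by simp [List.getLast_map])
  intro u v h
  have hmap := (hdigits u).symm.trans ((congrArg _ h).trans (hdigits v))
  refine toList.injective (List.map_injective_iff.mpr (fun i j hij => ?_) hmap)
  exact Fin.ext (by simpa using hij)

-- Counting `a` first makes the leading word of any element involving `a` contain `a`.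
def letterKey (a : Fin n) (u : FreeMonoid (Fin n)) : Lex (ℕ × Lex (ℕ × ℕ)) :=
  toLex (u.toList.count a, toLex (u.length, digitValue u))

lemma isMulKey_letterKey (a : Fin n) : IsMulKey (letterKey a) where
  injective u v h := by
    simp only [letterKey, toLex_inj, Prod.mk.injEq] at h
    exact digitValue_injective h.2.2
  mul_lt_mul_right {u v} c := by
    simp only [letterKey, Prod.Lex.toLex_lt_toLex, toList_mul, List.count_append, length_mul,
      digitValue_mul]
    rintro (h | ⟨h₁, h | ⟨h₂, h₃⟩⟩)
    · omega
    · omega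
    · rw [h₂]; omega
  mul_lt_mul_left c {u v} := by
    simp only [letterKey, Prod.Lex.toLex_lt_toLex, toList_mul, List.count_append, length_mul,
      digitValue_mul]
    have hpos : 0 < (n + 2) ^ c.length := by positivity
    rintro (h | ⟨h₁, h | ⟨h₂, h₃⟩⟩)
    · omega
    · omega
    · have := Nat.mul_lt_mul_of_pos_left h₃ hpos; omega

variable {a : Fin n}

lemma count_le_of_letterKey_le {u v : FreeMonoid (Fin n)} (h : letterKey a u ≤ letterKey a v) :
    u.toList.count a ≤ v.toList.count a := by
  rcases Prod.Lex.toLex_le_toLex.mp h with h | h <;> omega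

lemma eq_of_letterKey_le_letterKey_of {u : FreeMonoid (Fin n)}
    (h : letterKey a u ≤ letterKey a (of a)) (ha : a ∈ u.toList) : u = of a := by
  refine eq_of_of_mem_of_length_le_one ha ?_
  have hcount := List.count_pos_iff.mpr ha
  simp only [letterKey, Prod.Lex.toLex_le_toLex, toList_of, List.count_singleton_self,
    length_of] at h
  rcases h with h | ⟨-, h | ⟨h, -⟩⟩ <;> omega

end Key

end FreeMonoid

namespace MonoidAlgebra

section KeyBounded

variable {R M Λ : Type*} [Semiring R] [LinearOrder Λ]

def KeyBounded (κ : M → Λ) (f : R[M]) (a : M) : Prop := ∀ x ∈ f.coeff.support, κ x ≤ κ a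

lemma keyBounded_single (κ : M → Λ) (m : M) (r : R) : KeyBounded κ (single m r) m := by
  intro x hx
  rw [coeff_single] at hx
  rw [Finset.mem_singleton.mp (Finsupp.support_single_subset hx)]

variable [Mul M] {κ : M → Λ}

lemma KeyBounded.mul (hκ : IsMulKey κ) {f g : R[M]} {a b : M} (hf : KeyBounded κ f a)
    (hg : KeyBounded κ g b) : KeyBounded κ (f * g) (a * b) := by
  classical
  intro x hx
  obtain ⟨y, hy, z, hz, rfl⟩ := Finset.mem_mul.mp (support_coeff_mul_subset f g hx)
  exact hκ.mul_le_mul (hf y hy) (hg z hz)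

lemma KeyBounded.coeff_mul (hκ : IsMulKey κ) {f g : R[M]} {a b : M} (hf : KeyBounded κ f a)
    (hg : KeyBounded κ g b) : (f * g).coeff (a * b) = f.coeff a * g.coeff b :=
  coeff_mul_mul_of_uniqueMul (hκ.uniqueMul hf hg)

end KeyBounded

lemma coeff_algHom_apply {R M N : Type*} [CommSemiring R] [Monoid M] [Monoid N]
    (ψ : R[M] →ₐ[R] R[N]) (p : R[M]) (u : N) :
    (ψ p).coeff u = ∑ m ∈ p.coeff.support, p.coeff m * (ψ (of R M m)).coeff u := by
  rw [lift_unique ψ p, Finsupp.sum, coeff_sum, Finsupp.finsetSum_apply]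
  simp

lemma mem_of_forall_notMem_support {R α : Type*} [CommSemiring R] {a : α}
    {S : Subalgebra R R[FreeMonoid α]} (hS : ∀ i ≠ a, of R _ (FreeMonoid.of i) ∈ S)
    {r : R[FreeMonoid α]} (hr : ∀ u ∈ r.coeff.support, a ∉ u.toList) : r ∈ S := by
  have hword (u : FreeMonoid α) (hu : a ∉ u.toList) : of R _ u ∈ S := by
    induction u with
    | one => exact (map_one (of R (FreeMonoid α))).symm ▸ S.one_mem
    | of i => exact hS i (by simpa [eq_comm] using hu)
    | mul u v ihu ihv =>
      simp only [FreeMonoid.toList_mul, List.mem_append, not_or] at hu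
      rw [map_mul]
      exact S.mul_mem (ihu hu.1) (ihv hu.2)
  rw [← sum_coeff_single r]
  refine S.sum_mem fun u hu => ?_
  simpa [of_apply, smul_single'] using S.smul_mem (hword u (hr u hu)) (r.coeff u)

section Substitution

variable {R α : Type*} [CommSemiring R] [DecidableEq α]

def substLetterAlg (a : α) (f : R[FreeMonoid α]) : R[FreeMonoid α] →ₐ[R] R[FreeMonoid α] :=
  lift R R[FreeMonoid α] (FreeMonoid α)
    (FreeMonoid.lift fun i => if i = a then f else of R _ (FreeMonoid.of i))

variable {a : α} {f : R[FreeMonoid α]}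

@[simp]
lemma substLetterAlg_of_of_self : substLetterAlg a f (of R _ (FreeMonoid.of a)) = f := by
  simp [substLetterAlg]

@[simp]
lemma substLetterAlg_of_of_ne {i : α} (hi : i ≠ a) :
    substLetterAlg a f (of R _ (FreeMonoid.of i)) = of R _ (FreeMonoid.of i) := by
  simp [substLetterAlg, hi]

lemma eq_substLetterAlg (ψ : R[FreeMonoid α] →ₐ[R] R[FreeMonoid α])
    (hψ : ∀ i ≠ a, ψ (of R _ (FreeMonoid.of i)) = of R _ (FreeMonoid.of i)) :
    ψ = substLetterAlg a (ψ (of R _ (FreeMonoid.of a))) := by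
  refine (lift R R[FreeMonoid α] (FreeMonoid α)).symm.injective (FreeMonoid.hom_eq fun i => ?_)
  change ψ (of R _ (FreeMonoid.of i)) = substLetterAlg a _ (of R _ (FreeMonoid.of i))
  by_cases hi : i = a
  · rw [hi, substLetterAlg_of_of_self]
  · rw [substLetterAlg_of_of_ne hi, hψ i hi]

variable {Λ : Type*} [LinearOrder Λ] {κ : FreeMonoid α → Λ} {q : R[FreeMonoid α]}
  {w : FreeMonoid α}

lemma keyBounded_substLetterAlg_of (hκ : IsMulKey κ) (hq : KeyBounded κ q w)
    (m : FreeMonoid α) :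
    KeyBounded κ (substLetterAlg a q (of R _ m)) (FreeMonoid.substLetter a w m) ∧
      (substLetterAlg a q (of R _ m)).coeff (FreeMonoid.substLetter a w m) =
        q.coeff w ^ m.toList.count a := by
  induction m with
  | one =>
    rw [map_one, map_one, map_one, one_def]
    exact ⟨keyBounded_single κ _ _, by simp⟩
  | of i =>
    by_cases hi : i = a
    · rw [hi, substLetterAlg_of_of_self, FreeMonoid.substLetter_of_self]
      exact ⟨hq, by simp⟩
    · rw [substLetterAlg_of_of_ne hi, FreeMonoid.substLetter_of_of_ne hi, of_apply]
      exact ⟨keyBounded_single κ _ _, by simp [hi]⟩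
  | mul u v hu hv =>
    simp only [map_mul]
    refine ⟨hu.1.mul hκ hv.1, ?_⟩
    rw [hu.1.coeff_mul hκ hv.1, hu.2, hv.2, FreeMonoid.toList_mul, List.count_append, pow_add]

lemma exists_key_le_of_mem_support_substLetterAlg (hκ : IsMulKey κ) (hq : KeyBounded κ q w)
    {p : R[FreeMonoid α]} {u : FreeMonoid α} (hu : u ∈ (substLetterAlg a q p).coeff.support) :
    ∃ m ∈ p.coeff.support, κ u ≤ κ (FreeMonoid.substLetter a w m) := by
  rw [Finsupp.mem_support_iff, coeff_algHom_apply] at hu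
  obtain ⟨m, hm, hne⟩ := Finset.exists_ne_zero_of_sum_ne_zero hu
  exact ⟨m, hm, (keyBounded_substLetterAlg_of hκ hq m).1 u
    (Finsupp.mem_support_iff.mpr (right_ne_zero_of_mul hne))⟩

lemma coeff_substLetterAlg_of_forall_le (hκ : IsMulKey κ) (hq : KeyBounded κ q w)
    (hw : a ∈ w.toList) {p : R[FreeMonoid α]} {m₀ : FreeMonoid α}
    (hm₀ : m₀ ∈ p.coeff.support)
    (hmax : ∀ m ∈ p.coeff.support,
      κ (FreeMonoid.substLetter a w m) ≤ κ (FreeMonoid.substLetter a w m₀)) :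
    (substLetterAlg a q p).coeff (FreeMonoid.substLetter a w m₀) =
      p.coeff m₀ * q.coeff w ^ m₀.toList.count a := by
  rw [coeff_algHom_apply, Finset.sum_eq_single_of_mem m₀ hm₀,
    (keyBounded_substLetterAlg_of hκ hq m₀).2]
  intro m hm hne
  suffices FreeMonoid.substLetter a w m₀ ∉ (substLetterAlg a q (of R _ m)).coeff.support by
    rw [Finsupp.notMem_support_iff.mp this, mul_zero]
  refine fun hmem => hne ?_
  have hle := (keyBounded_substLetterAlg_of hκ hq m).1 _ hmem
  exact FreeMonoid.substLetter_injective hw (hκ.injective ((hmax m hm).antisymm hle))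

end Substitution

section LetterKey

variable {R : Type*} [CommSemiring R] {n : ℕ} {a : Fin n}

theorem letterKey_le_of_substLetterAlg_eq [NoZeroDivisors R] {p q : R[FreeMonoid (Fin n)]}
    (hq : q ≠ 0)
    (h : substLetterAlg a q p = of R _ (FreeMonoid.of a)) :
    FreeMonoid.of a ∈ p.coeff.support ∧
      ∀ m ∈ p.coeff.support,
        FreeMonoid.letterKey a m ≤ FreeMonoid.letterKey a (FreeMonoid.of a) := by
  have : Nontrivial R := by
    by_contra hR
    rw [not_nontrivial_iff_subsingleton] at hR
    exact hq (Subsingleton.elim _ _)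
  set σ := FreeMonoid.substLetter a
  set κ := FreeMonoid.letterKey a
  have hκ := FreeMonoid.isMulKey_letterKey a
  obtain ⟨w, hwq, hw⟩ := Finset.exists_max_image q.coeff.support κ
    (Finsupp.support_nonempty_iff.mpr (coeff_eq_zero.not.mpr hq))
  have hsupp : (substLetterAlg a q p).coeff.support = {FreeMonoid.of a} := by
    rw [h, of_apply, coeff_single, Finsupp.support_single _ one_ne_zero]
  obtain ⟨m, hm, hle⟩ := exists_key_le_of_mem_support_substLetterAlg hκ hw
    (hsupp ▸ Finset.mem_singleton_self _)
  have hwa : a ∈ w.toList := by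
    have := FreeMonoid.count_le_of_letterKey_le hle
    rw [FreeMonoid.count_substLetter, FreeMonoid.toList_of, List.count_singleton_self] at this
    exact List.count_pos_iff.mp (Nat.pos_of_mul_pos_left (Nat.lt_of_lt_of_le one_pos this))
  obtain ⟨m₀, hm₀, hmax⟩ :=
    Finset.exists_max_image p.coeff.support (κ ∘ σ w) ⟨m, hm⟩
  have hσm₀ : σ w m₀ = FreeMonoid.of a := by
    have hne : p.coeff m₀ * q.coeff w ^ m₀.toList.count a ≠ 0 :=
      mul_ne_zero (Finsupp.mem_support_iff.mp hm₀)
        (pow_ne_zero _ (Finsupp.mem_support_iff.mp hwq))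
    rw [← coeff_substLetterAlg_of_forall_le hκ hw hwa hm₀ hmax, ← Finsupp.mem_support_iff,
      hsupp] at hne
    exact Finset.mem_singleton.mp hne
  obtain ⟨rfl, rfl⟩ := FreeMonoid.substLetter_eq_of_self_iff.mp hσm₀
  simp only [σ, Function.comp, FreeMonoid.substLetter_self, MonoidHom.id_apply] at hmax
  exact ⟨hm₀, hmax⟩

theorem exists_eq_smul_add_of_letterKey_le {p : R[FreeMonoid (Fin n)]}
    (ha : FreeMonoid.of a ∈ p.coeff.support)
    (hp : ∀ m ∈ p.coeff.support,
      FreeMonoid.letterKey a m ≤ FreeMonoid.letterKey a (FreeMonoid.of a)) :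
    ∃ c ≠ (0 : R), ∃ r : R[FreeMonoid (Fin n)],
      (∀ u ∈ r.coeff.support, a ∉ u.toList) ∧
      p = c • of R _ (FreeMonoid.of a) + r := by
  classical
  refine ⟨p.coeff (FreeMonoid.of a), Finsupp.mem_support_iff.mp ha, p.erase (FreeMonoid.of a),
    fun u hu hau => ?_, ?_⟩
  · rw [coeff_erase, Finsupp.support_erase, Finset.mem_erase] at hu
    exact hu.1 (FreeMonoid.eq_of_letterKey_le_letterKey_of (hp u hu.2) hau)
  · rw [of_apply, smul_single', mul_one, single_add_erase]

theorem exists_algEquiv_apply_eq_smul_add [NoZeroDivisors R] [Nontrivial R]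
    (θ : R[FreeMonoid (Fin n)] ≃ₐ[R] R[FreeMonoid (Fin n)])
    (hθ : ∀ i ≠ a, θ (of R _ (FreeMonoid.of i)) = of R _ (FreeMonoid.of i)) :
    ∃ c ≠ (0 : R), ∃ r : R[FreeMonoid (Fin n)],
      (∀ u ∈ r.coeff.support, a ∉ u.toList) ∧
      θ (of R _ (FreeMonoid.of a)) = c • of R _ (FreeMonoid.of a) + r := by
  have hθsymm : ∀ i ≠ a, θ.symm (of R _ (FreeMonoid.of i)) = of R _ (FreeMonoid.of i) :=
    fun i hi => θ.symm_apply_eq.mpr (hθ i hi).symm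
  have hsubst : substLetterAlg a (θ.symm (of R _ (FreeMonoid.of a)))
      (θ (of R _ (FreeMonoid.of a))) = of R _ (FreeMonoid.of a) := by
    have hψ := eq_substLetterAlg (θ.symm : R[FreeMonoid (Fin n)] →ₐ[R] R[FreeMonoid (Fin n)])
      hθsymm
    exact (DFunLike.congr_fun hψ _).symm.trans (θ.symm_apply_apply _)
  obtain ⟨ha, hp⟩ := letterKey_le_of_substLetterAlg_eq (by simp [of_apply]) hsubst
  exact exists_eq_smul_add_of_letterKey_le ha hp

end LetterKey

end MonoidAlgebra

theorem exists_units_smul_add_of_fix_x_z (θ : FA K ≃ₐ[K] FA K) (hx : θ (Xv K 0) = Xv K 0)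
    (hz : θ (Xv K 2) = Xv K 2) :
    ∃ (β : Kˣ) (r : FA K), r ∈ Algebra.adjoin K {Xv K 0, Xv K 2} ∧
      θ (Xv K 1) = (β : K) • Xv K 1 + r := by
  obtain ⟨c, hc, r, hr, hθ⟩ := MonoidAlgebra.exists_algEquiv_apply_eq_smul_add (a := 1) θ
    fun i hi => by fin_cases i <;> simp_all [Xv]
  refine ⟨Units.mk0 c hc, r, MonoidAlgebra.mem_of_forall_notMem_support (fun i hi => ?_) hr,
    hθ⟩
  fin_cases i
  · exact Algebra.subset_adjoin (by simp [Xv])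
  · exact absurd rfl hi
  · exact Algebra.subset_adjoin (by simp [Xv])

/-- (a) Every algebra automorphism `θ` of `K⟨x,y,z⟩` fixing `x` and `z` satisfies
`θ(y) = βy + r(x,z)` with `β ∈ K∖{0}` and `r` in the subalgebra generated by `x` and `z`.
(b) Consequently, two `z`-automorphisms `φ = (f,g)`, `φ' = (f,g')` with the same first
coordinate differ by such a substitution: `φ'(y) = φ(βy + r(x,z))`. -/
theorem aut_fixing_x_z :
    (∀ θ : FA K ≃ₐ[K] FA K, θ (Xv K 0) = Xv K 0 → θ (Xv K 2) = Xv K 2 →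
      ∃ (β : Kˣ) (r : FA K), r ∈ Algebra.adjoin K {Xv K 0, Xv K 2} ∧
        θ (Xv K 1) = (β : K) • Xv K 1 + r) ∧
    (∀ φ φ' : FA K ≃ₐ[K] FA K, φ (Xv K 2) = Xv K 2 → φ' (Xv K 2) = Xv K 2 →
      φ (Xv K 0) = φ' (Xv K 0) →
      ∃ (β : Kˣ) (r : FA K), r ∈ Algebra.adjoin K {Xv K 0, Xv K 2} ∧
        φ' (Xv K 1) = φ ((β : K) • Xv K 1 + r)) := by
  refine ⟨exists_units_smul_add_of_fix_x_z K, fun φ φ' hz hz' hx => ?_⟩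
  obtain ⟨β, r, hr, hθ⟩ := exists_units_smul_add_of_fix_x_z K (φ'.trans φ.symm)
    (by simp [← hx]) (by simp [hz', φ.symm_apply_eq, hz])
  exact ⟨β, r, hr, by rw [← hθ]; simp⟩
end
end

section
/- Let K be a field, γ ∈ K, and let h₁(t,z) ∈ K⟨t,z⟩ be a nonzero polynomial which is homogeneous of positive degree with respect to t. Then h₁(−(γyz + zy), z) ≠ 0 in K⟨x,y,z⟩; consequently there is no polynomial h₂(x,z) ∈ K⟨x,z⟩ not involving y such that h₁((x−γy)z − zy, z) = h₂(x,z). -/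
open MonoidAlgebra

noncomputable section

variable (K : Type) [Field K]

/-! Order the words in `x, y, z` lexicographically with `y < z`. Under `t ↦ -(γyz + zy)`,
`z ↦ z`, a word `u` in `t, z` maps to a combination of words that are all at most the word
obtained from `u` by replacing each `t` with `zy`, and that word occurs with coefficient `±1`.
These leading words are pairwise distinct, so the substitution is injective.

For the second claim, the endomorphisms of `K⟨x,y,z⟩` killing `x`, resp. `x` and `y`, agree
on `K⟨x,z⟩`. Applied to `h₁((x - γy)z - zy, z)`, the first gives `h₁(-(γyz + zy), z) ≠ 0`,
the second gives `h₁(0, z) = 0` because every monomial of `h₁` contains `t`. -/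

open FreeMonoid

namespace MonoidAlgebra

theorem lift_injective_of_triangular {k G H L : Type*} [CommRing k] [NoZeroDivisors k]
    [Monoid G] [Monoid H] [LinearOrder L] (F : G →* MonoidAlgebra k H) (lead : G → H)
    (key : H → L) (hinj : Function.Injective (key ∘ lead))
    (hle : ∀ g, ∀ h ∈ (F g).coeff.support, key h ≤ key (lead g))
    (hlead : ∀ g, (F g).coeff (lead g) ≠ 0) :
    Function.Injective (lift k (MonoidAlgebra k H) G F) := by
  rw [injective_iff_map_eq_zero]
  intro p hp
  by_contra hp0
  obtain ⟨g₀, hg₀, hmax⟩ := p.coeff.support.exists_max_image (key ∘ lead)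
    (Finsupp.support_nonempty_iff.mpr (coeff_eq_zero.not.mpr hp0))
  have hcoeff : (lift k _ G F p).coeff (lead g₀) = p.coeff g₀ * (F g₀).coeff (lead g₀) := by
    rw [lift_apply, coeff_finsuppSum, Finsupp.sum_apply, Finsupp.sum,
      Finset.sum_eq_single_of_mem g₀ hg₀]
    · simp
    · intro g hg hne
      have : (F g).coeff (lead g₀) = 0 := by
        by_contra h
        exact hne (hinj (le_antisymm (hmax g hg) (hle g _ (Finsupp.mem_support_iff.mpr h))))
      simp [this]
  rw [hp, coeff_zero, Finsupp.zero_apply] at hcoeff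
  exact mul_ne_zero (Finsupp.mem_support_iff.mp hg₀) (hlead g₀) hcoeff.symm

theorem lift_freeMonoidLift_eq_zero {k A α : Type*} [CommSemiring k] [Semiring A] [Algebra k A]
    {f : α → A} {a : α} (ha : f a = 0) {p : MonoidAlgebra k (FreeMonoid α)}
    (hp : ∀ w ∈ p.coeff.support, a ∈ toList w) :
    lift k A (FreeMonoid α) (FreeMonoid.lift f) p = 0 := by
  rw [lift_apply]
  refine Finset.sum_eq_zero fun w hw => ?_
  dsimp only
  rw [FreeMonoid.lift_apply, List.prod_eq_zero (ha ▸ List.mem_map_of_mem (hp w hw)), smul_zero]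

end MonoidAlgebra

def subst3 (g : Fin 3 → FA K) : FA K →ₐ[K] FA K :=
  MonoidAlgebra.lift K (FA K) (FreeMonoid (Fin 3)) (FreeMonoid.lift g)

variable {K}

@[simp]
theorem subst3_Xv (g : Fin 3 → FA K) (i : Fin 3) : subst3 K g (Xv K i) = g i := by
  rw [subst3, Xv, lift_of, lift_eval_of]

theorem AlgHom.comp_subst2 (φ : FA K →ₐ[K] FA K) (f : Fin 2 → FA K) :
    φ.comp (subst2 K f) = subst2 K (φ ∘ f) := by
  refine MonoidAlgebra.algHom_ext (fun w => ?_) (Subsingleton.elim _ _)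
  simp only [AlgHom.comp_apply, subst2, lift_single, one_smul]
  exact DFunLike.congr_fun (FreeMonoid.comp_lift φ.toMonoidHom f) w

def leadWord : List (Fin 2) → List (Fin 3)
  | [] => []
  | 0 :: l => 2 :: 1 :: leadWord l
  | 1 :: l => 2 :: leadWord l

theorem leadWord_ne_cons_one (l : List (Fin 2)) (r : List (Fin 3)) :
    leadWord l ≠ 1 :: r := by
  match l with
  | [] | 0 :: _ | 1 :: _ => simp [leadWord]

theorem leadWord_injective : Function.Injective leadWord := by
  intro l l' h
  induction l generalizing l' with
  | nil => cases l' with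
    | nil => rfl
    | cons j l' => match j with | 0 | 1 => simp [leadWord] at h
  | cons i l ih => cases l' with
    | nil => match i with | 0 | 1 => simp [leadWord] at h
    | cons j l' =>
      match i, j with
      | 0, 0 | 1, 1 => rw [ih (by simpa [leadWord] using h)]
      | 0, 1 => exact (leadWord_ne_cons_one l' _ (by simpa [leadWord] using h.symm)).elim
      | 1, 0 => exact (leadWord_ne_cons_one l _ (by simpa [leadWord] using h)).elim

def yzSubst (γ : K) : Fin 2 → FA K := ![-(γ • (Xv K 1 * Xv K 2) + Xv K 2 * Xv K 1), Xv K 2]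

theorem yzSubst_zero (γ : K) :
    yzSubst γ 0 = single (ofList [1, 2]) (-γ) + single (ofList [2, 1]) (-1) := by
  simp only [yzSubst, Xv, of_apply, single_mul_single, smul_single, smul_eq_mul, mul_one,
    neg_add, single_neg]
  rfl

theorem yzSubst_one (γ : K) : yzSubst γ 1 = single (ofList [2]) 1 := rfl

theorem toList_le_leadWord_of_mem_support (γ : K) (l : List (Fin 2)) :
    ∀ v ∈ ((l.map (yzSubst γ)).prod).coeff.support, toList v ≤ leadWord l := by
  classical
  induction l with
  | nil => simp [leadWord, one_def]
  | cons i l ih =>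
    intro v hv
    match i with
    | 0 =>
      rw [List.map_cons, List.prod_cons, yzSubst_zero, add_mul, coeff_add] at hv
      rcases Finset.mem_union.mp (Finsupp.support_add hv) with hv | hv
      · obtain ⟨b, -, rfl⟩ := Finset.mem_image.mp (support_coeff_single_mul_subset _ _ _ hv)
        exact le_of_lt (show toList (ofList [1, 2] * b) < leadWord (0 :: l) from .rel (by decide))
      · obtain ⟨b, hb, rfl⟩ := Finset.mem_image.mp (support_coeff_single_mul_subset _ _ _ hv)
        exact List.cons_le_cons _ (List.cons_le_cons _ (ih b hb))
    | 1 =>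
      rw [List.map_cons, List.prod_cons, yzSubst_one] at hv
      obtain ⟨b, hb, rfl⟩ := Finset.mem_image.mp (support_coeff_single_mul_subset _ _ _ hv)
      exact List.cons_le_cons _ (ih b hb)

theorem coeff_leadWord_ne_zero (γ : K) (l : List (Fin 2)) :
    ((l.map (yzSubst γ)).prod).coeff (ofList (leadWord l)) ≠ 0 := by
  induction l with
  | nil => simp [leadWord, one_def]
  | cons i l ih =>
    match i with
    | 0 =>
      have : ofList (leadWord (0 :: l)) = ofList [2, 1] * ofList (leadWord l) := rfl
      rw [List.map_cons, List.prod_cons, yzSubst_zero, add_mul, coeff_add, Finsupp.add_apply,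
        coeff_single_mul_of_forall_mul_ne, this, coeff_single_mul_mul]
      · simpa using ih
      · intro d h
        simpa [leadWord] using congrArg toList h
    | 1 =>
      have : ofList (leadWord (1 :: l)) = ofList [2] * ofList (leadWord l) := rfl
      rw [List.map_cons, List.prod_cons, yzSubst_one, this, coeff_single_mul_mul, one_mul]
      exact ih

theorem subst2_yzSubst_injective (γ : K) : Function.Injective (subst2 K (yzSubst γ)) :=
  lift_injective_of_triangular (FreeMonoid.lift (yzSubst γ))
    (fun u => ofList (leadWord (toList u))) toList (leadWord_injective.comp toList.injective)
    (fun u v hv => toList_le_leadWord_of_mem_support γ (toList u) v <| by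
      rwa [← FreeMonoid.lift_apply])
    (fun u => by rw [FreeMonoid.lift_apply]; exact coeff_leadWord_ne_zero γ (toList u))

/-- Let `γ ∈ K` and let `h₁(t,z) ∈ K⟨t,z⟩` be a nonzero polynomial, homogeneous of positive
degree with respect to `t`.  Then `h₁(−(γyz + zy), z) ≠ 0` in `K⟨x,y,z⟩`; consequently there
is no polynomial `h₂(x,z)` in the subalgebra generated by `x` and `z` such that
`h₁((x−γy)z − zy, z) = h₂`. -/
theorem h1_subst_ne_zero (γ : K) (h₁ : FA2 K) (hne : h₁ ≠ 0) (m : ℕ) (hm : 0 < m)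
    (hhom : ∀ w ∈ h₁.coeff.support, (FreeMonoid.toList w).count 0 = m) :
    subst2 K ![-(γ • (Xv K 1 * Xv K 2) + Xv K 2 * Xv K 1), Xv K 2] h₁ ≠ 0 ∧
    ¬ ∃ h₂ ∈ Algebra.adjoin K {Xv K 0, Xv K 2},
        subst2 K ![(Xv K 0 - γ • Xv K 1) * Xv K 2 - Xv K 2 * Xv K 1, Xv K 2] h₁ = h₂ := by
  have hN : subst2 K (yzSubst γ) h₁ ≠ 0 :=
    (map_ne_zero_iff _ (subst2_yzSubst_injective γ)).mpr hne
  refine ⟨hN, ?_⟩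
  rintro ⟨h₂, hmem, hh₂⟩
  set f : Fin 2 → FA K := ![(Xv K 0 - γ • Xv K 1) * Xv K 2 - Xv K 2 * Xv K 1, Xv K 2]
  set killX := subst3 K ![0, Xv K 1, Xv K 2]
  set killXY := subst3 K ![0, 0, Xv K 2]
  have hkillX : killX ∘ f = yzSubst γ := by
    ext i : 1
    match i with
    | 0 => simp [f, killX, yzSubst, sub_eq_add_neg, neg_add_rev, add_comm]
    | 1 => simp [f, killX, yzSubst]
  have hkillXY : (killXY ∘ f) 0 = 0 := by simp [f, killXY]
  have hagree : killX h₂ = killXY h₂ :=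
    AlgHom.eqOn_adjoin_iff.mpr (by rintro _ (rfl | rfl) <;> simp [killX, killXY]) hmem
  apply hN
  calc subst2 K (yzSubst γ) h₁
      _ = killX (subst2 K f h₁) := by rw [← hkillX, ← AlgHom.comp_subst2]; rfl
      _ = killXY (subst2 K f h₁) := by rw [hh₂, hagree]
      _ = subst2 K (killXY ∘ f) h₁ := by rw [← AlgHom.comp_subst2]; rfl
      _ = 0 := lift_freeMonoidLift_eq_zero hkillXY fun w hw =>
        List.count_pos_iff.mp (hhom w hw ▸ hm)
end
end

section
/- Let K be a field. The polynomial f(x,y,z) = x + (xz − zy) is not a z-coordinate of K⟨x,y,z⟩: there is no z-automorphism φ of K⟨x,y,z⟩ with φ(x) = x + xz − zy. -/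
open MonoidAlgebra

noncomputable section

variable (K : Type) [Field K]

/-!
For points `u, v : σ → R`, call `D : FreeAlgebra R σ → R` a `(u, v)`-twisted derivation if
`D (a * b) = u(a) D(b) + D(a) v(b)`, where `u(a)` is `a` evaluated at `u`. Such a `D` is the
corner entry of the upper-triangular representation `ι i ↦ !![u i, c i; 0, v i]`, and it is
determined by the values `c i = D (ι i)`. Precomposing with an endomorphism `φ` gives a twisted
derivation for the pulled-back points (chain rule), so when `φ` is surjective its Jacobian
`(∂ⱼ φ(ι l))` at `(u, v)` has a left inverse and hence no zero row. At `u = 0`, `v = (0, 0, -1)`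
every twisted derivation vanishes on `x + xz - zy`, which is therefore not even the image of `x`
under an automorphism.
-/

namespace FreeAlgebra

variable {R σ : Type*} [CommRing R]

def triangularRep (u v c : σ → R) : FreeAlgebra R σ →ₐ[R] Matrix (Fin 2) (Fin 2) R :=
  lift R fun i => !![u i, c i; 0, v i]

def twistedDeriv (u v c : σ → R) : FreeAlgebra R σ →ₗ[R] R :=
  Matrix.entryLinearMap R R 0 1 ∘ₗ (triangularRep u v c).toLinearMap

variable (u v c : σ → R)

@[simp]
theorem triangularRep_ι (i : σ) : triangularRep u v c (ι R i) = !![u i, c i; 0, v i] :=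
  lift_ι_apply _ _

theorem triangularRep_eq (h : FreeAlgebra R σ) :
    triangularRep u v c h = !![lift R u h, twistedDeriv u v c h; 0, lift R v h] := by
  induction h with
  | grade0 r =>
    ext i j
    fin_cases i <;> fin_cases j <;> simp [twistedDeriv, Matrix.algebraMap_eq_diagonal]
  | grade1 i => simp [twistedDeriv]
  | mul a b ha hb =>
    have hab : twistedDeriv u v c (a * b) =
        (triangularRep u v c a * triangularRep u v c b) 0 1 :=
      congrArg (· 0 1) (map_mul (triangularRep u v c) a b)
    rw [hab, map_mul, ha, hb]
    simp
  | add a b ha hb =>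
    have hab : twistedDeriv u v c (a + b) =
        (triangularRep u v c a + triangularRep u v c b) 0 1 :=
      congrArg (· 0 1) (map_add (triangularRep u v c) a b)
    rw [hab, map_add, ha, hb]
    simp

@[simp]
theorem twistedDeriv_ι (i : σ) : twistedDeriv u v c (ι R i) = c i := by
  simp [twistedDeriv]

@[simp]
theorem twistedDeriv_mul (a b : FreeAlgebra R σ) :
    twistedDeriv u v c (a * b) =
      lift R u a * twistedDeriv u v c b + twistedDeriv u v c a * lift R v b := by
  have := congrArg (· 0 1) (map_mul (triangularRep u v c) a b)
  simp only [triangularRep_eq _ _ _ (a * b), triangularRep_eq _ _ _ a, triangularRep_eq _ _ _ b,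
    Matrix.mul_fin_two] at this
  simpa using this

@[simp]
theorem twistedDeriv_algebraMap (r : R) : twistedDeriv u v c (algebraMap R _ r) = 0 := by
  simp [twistedDeriv, Matrix.algebraMap_eq_diagonal]

theorem triangularRep_comp (φ : FreeAlgebra R σ →ₐ[R] FreeAlgebra R σ) :
    (triangularRep u v c).comp φ =
      triangularRep (fun l => lift R u (φ (ι R l))) (fun l => lift R v (φ (ι R l)))
        (fun l => twistedDeriv u v c (φ (ι R l))) := by
  ext i
  simp [triangularRep_eq u v c (φ (ι R i))]

theorem twistedDeriv_comp (φ : FreeAlgebra R σ →ₐ[R] FreeAlgebra R σ) (h : FreeAlgebra R σ) :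
    twistedDeriv u v c (φ h) =
      twistedDeriv (fun l => lift R u (φ (ι R l))) (fun l => lift R v (φ (ι R l)))
        (fun l => twistedDeriv u v c (φ (ι R l))) h :=
  congrArg (· 0 1) (DFunLike.congr_fun (triangularRep_comp u v c φ) h)

variable [DecidableEq σ]

def gradient : FreeAlgebra R σ →ₗ[R] σ → R :=
  LinearMap.pi fun k => twistedDeriv u v (Pi.single k 1)

@[simp]
theorem gradient_ι (i : σ) : gradient u v (ι R i) = Pi.single i 1 := by
  ext k
  simp [gradient, Pi.single_apply, eq_comm]

@[simp]
theorem gradient_algebraMap (r : R) : gradient u v (algebraMap R _ r) = 0 := by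
  ext k
  simp [gradient]

@[simp]
theorem gradient_mul (a b : FreeAlgebra R σ) :
    gradient u v (a * b) = lift R u a • gradient u v b + lift R v b • gradient u v a := by
  ext k
  simp [gradient, mul_comm]

variable [Fintype σ]

theorem twistedDeriv_eq_dotProduct (h : FreeAlgebra R σ) :
    twistedDeriv u v c h = c ⬝ᵥ gradient u v h := by
  induction h with
  | grade0 r => simp
  | grade1 i => simp
  | mul a b ha hb =>
    simp only [twistedDeriv_mul, ha, hb, gradient_mul, dotProduct_add, dotProduct_smul, smul_eq_mul]
    ring
  | add a b ha hb => simp only [map_add, ha, hb, dotProduct_add]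

def jacobian (φ : FreeAlgebra R σ →ₐ[R] FreeAlgebra R σ) : Matrix σ σ R :=
  Matrix.of fun l => gradient u v (φ (ι R l))

theorem exists_mul_jacobian_eq_one {φ : FreeAlgebra R σ →ₐ[R] FreeAlgebra R σ}
    (hφ : Function.Surjective φ) : ∃ M : Matrix σ σ R, M * jacobian u v φ = 1 := by
  choose ψ hψ using fun i => hφ (ι R i)
  refine ⟨Matrix.of fun i => gradient (fun l => lift R u (φ (ι R l)))
    (fun l => lift R v (φ (ι R l))) (ψ i), ?_⟩
  ext i j
  calc _ = twistedDeriv u v (Pi.single j 1) (φ (ψ i)) := by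
        rw [twistedDeriv_comp, twistedDeriv_eq_dotProduct, Matrix.mul_apply, dotProduct]
        simp [jacobian, gradient, mul_comm]
    _ = (1 : Matrix σ σ R) i j := by
        rw [hψ, twistedDeriv_ι, Pi.single_apply, Matrix.one_apply]

theorem gradient_ne_zero_of_surjective [Nontrivial R]
    {φ : FreeAlgebra R σ →ₐ[R] FreeAlgebra R σ} (hφ : Function.Surjective φ) (l : σ) :
    gradient u v (φ (ι R l)) ≠ 0 := by
  intro h0
  obtain ⟨M, hM⟩ := exists_mul_jacobian_eq_one u v hφ
  have hdet : (jacobian u v φ).det = 0 :=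
    Matrix.det_eq_zero_of_row_eq_zero l fun k => congrFun h0 k
  simpa [hdet] using congrArg Matrix.det hM

end FreeAlgebra

theorem equivMonoidAlgebraFreeMonoid_symm_Xv (i : Fin 3) :
    FreeAlgebra.equivMonoidAlgebraFreeMonoid.symm (Xv K i) = FreeAlgebra.ι K i := by
  rw [AlgEquiv.symm_apply_eq]
  simp [FreeAlgebra.equivMonoidAlgebraFreeMonoid, Xv]

/-- The polynomial `f = x + (xz − zy)` is not a `z`-coordinate of `K⟨x,y,z⟩`:
there is no algebra automorphism `φ` of `K⟨x,y,z⟩` with `φ(z) = z` and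
`φ(x) = x + xz − zy`. -/
theorem not_z_coordinate_x_add_xz_sub_zy :
    ¬ ∃ φ : FA K ≃ₐ[K] FA K, φ (Xv K 2) = Xv K 2 ∧
      φ (Xv K 0) = Xv K 0 + Xv K 0 * Xv K 2 - Xv K 2 * Xv K 1 := by
  rintro ⟨φ, -, hx⟩
  let e : FreeAlgebra K (Fin 3) ≃ₐ[K] FA K := FreeAlgebra.equivMonoidAlgebraFreeMonoid
  let ψ := (e.trans φ).trans e.symm
  have hψ : ψ (FreeAlgebra.ι K 0) =
      FreeAlgebra.ι K 0 + FreeAlgebra.ι K 0 * FreeAlgebra.ι K 2 -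
        FreeAlgebra.ι K 2 * FreeAlgebra.ι K 1 := by
    simp [ψ, e, ← equivMonoidAlgebraFreeMonoid_symm_Xv, hx]
  -- At these points the twisted derivations of `x`, `xz` and `zy` are `c₀`, `-c₀` and `0`.
  apply FreeAlgebra.gradient_ne_zero_of_surjective 0 ![0, 0, -1] (φ := ψ.toAlgHom) ψ.surjective 0
  ext k
  fin_cases k <;> simp [hψ]
end
end
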